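/- arXiv:2503.02340 — 10 statements merged into one kernel-verified Lean document; each statement's English description precedes it below -/
import Mathlib

section
/- Let 1 < p < 2 and κ > 0. There exists a constant c₁ = c₁(p,κ) > 0 such that for all x, y ∈ ℝⁿ with x ≠ 0: |x+y|^{p−2}(x+y)·y ≥ |x|^{p−2}x·y + (1−κ)·ω₁(x, x+y)·|y|² + (p−2)(1−κ)·ω₂(x, x+y)·(|x| − |x+y|)² + c₁·min{|y|^p, |x|^{p−2}|y|²}. -/
open MeasureTheory Real Filter RealInnerProductSpace

noncomputable section

abbrev En (n : ℕ) := EuclideanSpace ℝ (Fin n)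

def pstar (n : ℕ) (p : ℝ) : ℝ := (n : ℝ) * p / ((n : ℝ) - p)

/-- Talenti bubble profile `U[z,λ]`. -/
def Ubub (n : ℕ) (p : ℝ) (z : En n) (lam : ℝ) (x : En n) : ℝ :=
  lam ^ (((n : ℝ) - p) / p) *
    (1 + lam ^ (p / (p - 1)) * ‖x - z‖ ^ (p / (p - 1))) ^ (-(((n : ℝ) - p) / p))

/-- `S` is the optimal `p`-Sobolev constant on `ℝⁿ`. -/
def IsOptimalSobolev (n : ℕ) (p S : ℝ) : Prop :=
  0 < S ∧
  (∀ u : En n → ℝ, ContDiff ℝ (⊤ : ℕ∞) u → HasCompactSupport u →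
    (∫ x, ‖gradient u x‖ ^ p) ^ (1 / p) ≥
      S * (∫ x, |u x| ^ pstar n p) ^ (1 / pstar n p)) ∧
  (∀ S' : ℝ,
    (∀ u : En n → ℝ, ContDiff ℝ (⊤ : ℕ∞) u → HasCompactSupport u →
      (∫ x, ‖gradient u x‖ ^ p) ^ (1 / p) ≥
        S' * (∫ x, |u x| ^ pstar n p) ^ (1 / pstar n p)) →
    S' ≤ S)

/-- Generators of the tangent space `T_vM` at `v = a·U[z,λ]`: `v` itself together with the
partial derivatives of `(z,λ) ↦ a·U[z,λ]` with respect to `λ` and the components of `z`. -/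
def tangentGens (n : ℕ) (p a : ℝ) (z : En n) (lam : ℝ) : Set (En n → ℝ) :=
  insert (fun x => a * Ubub n p z lam x)
    (insert (fun x => deriv (fun l => a * Ubub n p z l x) lam)
      (Set.range fun i : Fin n =>
        fun x => deriv (fun t : ℝ => a * Ubub n p (z + t • EuclideanSpace.single i 1) lam x) 0))

/-- `φ` is orthogonal to `T_vM` (in `L²(v^{p*-2})`) for `v = a·U[z,λ]`. -/
def OrthTangent (n : ℕ) (p a : ℝ) (z : En n) (lam : ℝ) (φ : En n → ℝ) : Prop :=
  ∀ ξ ∈ Submodule.span ℝ (tangentGens n p a z lam),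
    Integrable (fun x =>
        (a * Ubub n p z lam x) ^ (pstar n p - 2) * ξ x * φ x) ∧
    ∫ x, (a * Ubub n p z lam x) ^ (pstar n p - 2) * ξ x * φ x = 0

/-- The `W^{-1,q}` norm of `P(u) = -div(|Du|^{p-2}Du) - |u|^{p*-2}u`. -/
def PNorm (n : ℕ) (p : ℝ) (u : En n → ℝ) : ℝ :=
  sSup {r | ∃ φ : En n → ℝ, ContDiff ℝ (⊤ : ℕ∞) φ ∧ HasCompactSupport φ ∧
    (∫ x, ‖gradient φ x‖ ^ p) ^ (1 / p) ≤ 1 ∧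
    r = ∫ x, (‖gradient u x‖ ^ (p - 2) * ⟪gradient u x, gradient φ x⟫ -
          |u x| ^ (pstar n p - 2) * u x * φ x)}

/-- weight ω₁ (for `1 < p < 2`). -/
def w1 (n : ℕ) (p : ℝ) (x w : En n) : ℝ :=
  if ‖x‖ ≤ ‖w‖ then ‖w‖ ^ (p - 2) else ‖x‖ ^ (p - 2)

/-- weight ω₂ (for `1 < p < 2`). -/
def w2 (n : ℕ) (p : ℝ) (x w : En n) : ℝ :=
  if ‖x‖ ≤ ‖w‖ then ‖w‖ ^ (p - 1) / ((2 - p) * ‖w‖ + (p - 1) * ‖x‖) else ‖x‖ ^ (p - 2)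

/-- weight ω₃ (for `p ≥ 2`), built from the constant `c₃`. -/
def w3 (n : ℕ) (p c₃ : ℝ) (x w : En n) : ℝ :=
  if ‖x‖ ≤ ‖w‖ then ‖x‖ ^ (p - 2)
  else if c₃ ^ (1 / (p - 1)) * ‖x‖ ≤ ‖w‖ then ‖w‖ ^ (p - 1) / ‖x‖
  else c₃ * ‖x‖ ^ (p - 2)

/-- weight ω₄ (for `p ≥ 2`). -/
def w4 (n : ℕ) (p : ℝ) (x w : En n) : ℝ :=
  if ‖x‖ ≤ ‖w‖ then ‖x‖ ^ (p - 2) else ‖w‖ ^ (p - 1) / ‖x‖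

set_option maxHeartbeats 1000000 in
lemma FZbern {p : ℝ} (hp1 : 1 < p) (hp2 : p < 2) {a b : ℝ} (hb : 0 ≤ b) (hba : b ≤ a) :
    (p - 1) * a ^ (p - 2) * (a - b) ≤ a ^ (p - 1) - b ^ (p - 1) := by
  rcases eq_or_lt_of_le (hb.trans hba) with h0 | ha
  · have hb0 : b = 0 := le_antisymm (hba.trans h0.ge) hb
    have ha0 : a = 0 := h0.symm
    subst hb0; subst ha0
    simp
  · have hg := Real.geom_mean_le_arith_mean2_weighted (w₁ := p - 1) (w₂ := 2 - p)
      (p₁ := b) (p₂ := a) (by linarith) (by linarith) hb (hb.trans hba) (by ring)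
    have hap2 : (0:ℝ) < a ^ (p - 2) := Real.rpow_pos_of_pos ha _
    have hmul := mul_le_mul_of_nonneg_right hg hap2.le
    have hcanc : a ^ (2 - p) * a ^ (p - 2) = 1 := by
      rw [← Real.rpow_add ha]; norm_num
    have h2 : b ^ (p - 1) ≤ ((p - 1) * b + (2 - p) * a) * a ^ (p - 2) := by
      calc b ^ (p - 1) = b ^ (p - 1) * (a ^ (2 - p) * a ^ (p - 2)) := by rw [hcanc]; ring
        _ = b ^ (p - 1) * a ^ (2 - p) * a ^ (p - 2) := by ring
        _ ≤ ((p - 1) * b + (2 - p) * a) * a ^ (p - 2) := hmul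
    have h1 : a ^ (p - 2) * a = a ^ (p - 1) := by
      rw [← Real.rpow_add_one ha.ne', show p - 2 + 1 = p - 1 by ring]
    have h1a := mul_le_mul_of_nonneg_left h1.le (by linarith : (0:ℝ) ≤ p - 1)
    have h1b := mul_le_mul_of_nonneg_left h1.ge (by linarith : (0:ℝ) ≤ p - 1)
    linarith [h2, h1a, h1b]

set_option maxHeartbeats 1000000 in
lemma FZmaster (p κ : ℝ) (hp1 : 1 < p) (hp2 : p < 2) (hκ : 0 < κ)
    (s r t yn : ℝ) (hs : 0 < s) (hr : 0 ≤ r) (hyn : 0 ≤ yn)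
    (ht : |t| ≤ s * r) (hy2 : yn ^ 2 = s ^ 2 + r ^ 2 - 2 * t) :
    r ^ (p - 2) * (r ^ 2 - t) ≥
      s ^ (p - 2) * (t - s ^ 2)
        + (1 - κ) * (if s ≤ r then r ^ (p - 2) else s ^ (p - 2)) * yn ^ 2
        + (p - 2) * (1 - κ) *
            (if s ≤ r then r ^ (p - 1) / ((2 - p) * r + (p - 1) * s) else s ^ (p - 2)) *
            (s - r) ^ 2
        + min κ 1 * ((p - 1) * (2:ℝ) ^ (p - 5) / 4) *
            min (yn ^ p) (s ^ (p - 2) * yn ^ 2) := by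
  have hp10 : (0:ℝ) < p - 1 := by linarith
  have hp20 : (0:ℝ) < 2 - p := by linarith
  have hpneg : p - 2 ≤ 0 := by linarith
  set A := s ^ (p - 2) with hAdef
  set B := r ^ (p - 2) with hBdef
  set A1 := s ^ (p - 1) with hA1def
  set B1 := r ^ (p - 1) with hB1def
  have hA : 0 < A := Real.rpow_pos_of_pos hs _
  have hA1 : 0 < A1 := Real.rpow_pos_of_pos hs _
  have hB : 0 ≤ B := Real.rpow_nonneg hr _
  have hB1 : 0 ≤ B1 := Real.rpow_nonneg hr _
  have hAs : A * s = A1 := by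
    rw [hAdef, hA1def, show p - 1 = p - 2 + 1 by ring, Real.rpow_add_one hs.ne']
  have hBr : B * r = B1 := by
    rcases hr.eq_or_lt with h | h
    · rw [hBdef, hB1def, ← h, Real.zero_rpow hp10.ne', mul_zero]
    · rw [hBdef, hB1def, show p - 1 = p - 2 + 1 by ring, Real.rpow_add_one h.ne']
  have hB1r : B1 * r = r ^ p := by
    rcases hr.eq_or_lt with h | h
    · rw [hB1def, ← h, Real.zero_rpow (by linarith : p ≠ 0), mul_zero]
    · rw [hB1def, show p = p - 1 + 1 from by ring, Real.rpow_add_one h.ne']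
      rw [show p - 1 + 1 - 1 = p - 1 by ring]
  have hBr2 : B * r ^ 2 = r ^ p := by
    have e : B * r ^ 2 = B * r * r := by ring
    rw [e, hBr, hB1r]
  set δ := s * r - t with hδdef
  have habs := abs_le.mp ht
  have hδ0 : 0 ≤ δ := by rw [hδdef]; linarith [habs.2]
  have hδ2 : δ ≤ 2 * (s * r) := by rw [hδdef]; linarith [habs.1]
  have hyd : yn ^ 2 = (s - r) ^ 2 + 2 * δ := by rw [hy2, hδdef]; ring
  set ω₁ := if s ≤ r then B else A with hω₁def
  set ω₂ := if s ≤ r then B1 / ((2 - p) * r + (p - 1) * s) else A with hω₂def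
  set D := (s - r) * (A1 - B1) with hDdef
  clear_value A B A1 B1 δ ω₁ ω₂ D
  -- base inequality
  have hbase : (ω₁ + (p - 2) * ω₂) * (s - r) ^ 2 ≤ D := by
    rcases le_or_gt s r with hsr | hsr
    · rw [hω₁def, hω₂def, if_pos hsr, if_pos hsr, hDdef]
      have hrpos : 0 < r := lt_of_lt_of_le hs hsr
      have hΔ : (0:ℝ) < (2 - p) * r + (p - 1) * s := by
        have u1 := mul_nonneg hp20.le hr
        have u2 := mul_pos hp10 hs
        linarith
      have hkey : B + (p - 2) * (B1 / ((2 - p) * r + (p - 1) * s)) =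
          (p - 1) * s * B / ((2 - p) * r + (p - 1) * s) := by
        field_simp
        linear_combination (2 - p) * hBr
      have hbR : (p - 1) * B * (r - s) ≤ B1 - A1 := by
        rw [hBdef, hB1def, hA1def]; exact FZbern hp1 hp2 hs.le hsr
      have h5 : (p - 1) * s * B ≤ (p - 1) * B * ((2 - p) * r + (p - 1) * s) := by
        have u := mul_nonneg (mul_nonneg (mul_nonneg hp10.le hB) hp20.le)
          (sub_nonneg.mpr hsr)
        linarith [u]
      have h6 : (p - 1) * s * B / ((2 - p) * r + (p - 1) * s) ≤ (p - 1) * B := by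
        rw [div_le_iff₀ hΔ]; linarith [h5]
      have h7 := mul_le_mul_of_nonneg_right h6 (sq_nonneg (s - r))
      have h8 := mul_le_mul_of_nonneg_right hbR (sub_nonneg.mpr hsr)
      rw [hkey]
      linarith [h7, h8]
    · rw [hω₁def, hω₂def, if_neg (not_le.mpr hsr), if_neg (not_le.mpr hsr), hDdef]
      have hbS : (p - 1) * A * (s - r) ≤ A1 - B1 := by
        rw [hAdef, hA1def, hB1def]; exact FZbern hp1 hp2 hr hsr.le
      have h8 := mul_le_mul_of_nonneg_right hbS (sub_nonneg.mpr hsr.le)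
      linarith [h8]
  have hE0 : 0 ≤ ω₁ + (p - 2) * ω₂ := by
    rcases le_or_gt s r with hsr | hsr
    · rw [hω₁def, hω₂def, if_pos hsr, if_pos hsr]
      have hrpos : 0 < r := lt_of_lt_of_le hs hsr
      have hΔ : (0:ℝ) < (2 - p) * r + (p - 1) * s := by
        have u1 := mul_nonneg hp20.le hr
        have u2 := mul_pos hp10 hs
        linarith
      have h9 : (2 - p) * B1 ≤ B * ((2 - p) * r + (p - 1) * s) := by
        have e : (2 - p) * B1 = (2 - p) * (B * r) := by rw [hBr]
        have u := mul_nonneg (mul_nonneg hp10.le hB) hs.le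
        linarith [e.le, e.ge, u]
      have h10 : (2 - p) * B1 / ((2 - p) * r + (p - 1) * s) ≤ B := by
        rw [div_le_iff₀ hΔ]; linarith [h9]
      have e2 : (p - 2) * (B1 / ((2 - p) * r + (p - 1) * s)) =
          -((2 - p) * B1 / ((2 - p) * r + (p - 1) * s)) := by ring
      linarith [h10, e2.le, e2.ge]
    · rw [hω₁def, hω₂def, if_neg (not_le.mpr hsr), if_neg (not_le.mpr hsr)]
      have u := mul_nonneg hp10.le hA.le
      linarith [u]
  have hω₁0 : 0 ≤ ω₁ := by
    rw [hω₁def]; split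
    · exact hB
    · exact hA.le
  have hD0 : 0 ≤ D := by
    rcases le_or_gt s r with hsr | hsr
    · have h1 : A1 ≤ B1 := by
        rw [hA1def, hB1def]; exact Real.rpow_le_rpow hs.le hsr (by linarith)
      have h2 := mul_nonneg (sub_nonneg.mpr hsr) (sub_nonneg.mpr h1)
      rw [hDdef]; linarith [h2]
    · have h1 : B1 ≤ A1 := by
        rw [hA1def, hB1def]; exact Real.rpow_le_rpow hr hsr.le (by linarith)
      have h2 := mul_nonneg (sub_nonneg.mpr hsr.le) (sub_nonneg.mpr h1)
      rw [hDdef]; linarith [h2]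
  have hsumδ : 2 * ω₁ * δ ≤ (A + B) * δ := by
    rcases hr.eq_or_lt with h0 | hrpos
    · have ht0 : δ = 0 := by
        rw [hδdef, ← h0]
        have h1 := habs.1
        have h2 := habs.2
        rw [← h0] at h1 h2
        simp only [mul_zero] at h1 h2 ⊢
        linarith
      rw [ht0]; simp
    · have h2ω : 2 * ω₁ ≤ A + B := by
        rcases le_or_gt s r with hsr | hsr
        · have hba : B ≤ A := by
            rw [hAdef, hBdef]; exact Real.rpow_le_rpow_of_nonpos hs hsr hpneg
          rw [hω₁def, if_pos hsr]; linarith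
        · have hab : A ≤ B := by
            rw [hAdef, hBdef]; exact Real.rpow_le_rpow_of_nonpos hrpos hsr.le hpneg
          rw [hω₁def, if_neg (not_le.mpr hsr)]; linarith
      exact mul_le_mul_of_nonneg_right h2ω hδ0
  -- constants
  set a := (p - 1) * (2:ℝ) ^ (p - 5) with hadef
  clear_value a
  have h2p5 : (0:ℝ) < (2:ℝ) ^ (p - 5) := Real.rpow_pos_of_pos two_pos _
  have ha0 : 0 < a := by rw [hadef]; exact mul_pos hp10 h2p5
  have h2cube : (2:ℝ) ^ (p - 5) * 8 = (2:ℝ) ^ (p - 2) := by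
    have h3 : ((2:ℝ) ^ (3:ℝ)) = 8 := by
      rw [show (3:ℝ) = ((3:ℕ):ℝ) by norm_num, Real.rpow_natCast]; norm_num
    rw [← h3, ← Real.rpow_add two_pos]
    congr 1; ring
  have h2p2le1 : (2:ℝ) ^ (p - 2) ≤ 1 :=
    Real.rpow_le_one_of_one_le_of_nonpos one_le_two (by linarith)
  have h18 : (2:ℝ) ^ (p - 5) ≤ 1 / 8 := by linarith [h2cube]
  have ha1 : a ≤ 1 := by
    rw [hadef]
    have u := mul_le_mul (by linarith : p - 1 ≤ (1:ℝ)) h18 h2p5.le zero_le_one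
    linarith [u]
  have ha8 : a * 8 ≤ p - 1 := by
    rw [hadef]
    have u := mul_le_mul_of_nonneg_left h2p2le1 hp10.le
    have e : (p - 1) * ((2:ℝ) ^ (p - 5) * 8) = (p - 1) * (2:ℝ) ^ (p - 2) := by
      rw [h2cube]
    linarith [u, e.le, e.ge]
  have haa : a ≤ p - 1 := by linarith [ha0]
  have h25 : (2:ℝ) ^ (p - 5) ≤ (2:ℝ) ^ (p - 2) :=
    Real.rpow_le_rpow_of_exponent_le one_le_two (by linarith)
  have haB : a ≤ (p - 1) * (2:ℝ) ^ (p - 2) := by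
    rw [hadef]
    exact mul_le_mul_of_nonneg_left h25 hp10.le
  have haa2 : a ≤ (2:ℝ) ^ (p - 2) := by
    rw [hadef]
    have u := mul_le_mul_of_nonneg_right (by linarith : p - 1 ≤ (1:ℝ)) h2p5.le
    linarith [u, h25]
  -- the two comparison quantities
  set φ₁ := min (((s - r) ^ 2) ^ (p / 2)) (A * (s - r) ^ 2) with hφ₁def
  set φ₂ := min ((2 * δ) ^ (p / 2)) (A * (2 * δ)) with hφ₂def
  have hφ₁0 : 0 ≤ φ₁ :=
    le_min (Real.rpow_nonneg (sq_nonneg _) _) (mul_nonneg hA.le (sq_nonneg _))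
  have hδδ : (0:ℝ) ≤ 2 * δ := by linarith
  have hφ₂0 : 0 ≤ φ₂ :=
    le_min (Real.rpow_nonneg hδδ _) (mul_nonneg hA.le hδδ)
  clear_value φ₁ φ₂
  have hdb : ∀ X : ℝ, 0 ≤ X → (2 * X) ^ (p / 2) ≤ 2 * X ^ (p / 2) := by
    intro X hX
    rw [Real.mul_rpow (by norm_num) hX]
    have h2 : (2:ℝ) ^ (p / 2) ≤ 2 := by
      calc (2:ℝ) ^ (p / 2) ≤ (2:ℝ) ^ (1:ℝ) :=
            Real.rpow_le_rpow_of_exponent_le one_le_two (by linarith)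
        _ = 2 := Real.rpow_one 2
    exact mul_le_mul_of_nonneg_right h2 (Real.rpow_nonneg hX _)
  -- hT1 : a * φ₁ ≤ D
  have hT1 : a * φ₁ ≤ D := by
    rcases le_or_gt s r with hsr | hsr
    · have hrpos : 0 < r := lt_of_lt_of_le hs hsr
      have hbR : (p - 1) * B * (r - s) ≤ B1 - A1 := by
        rw [hBdef, hB1def, hA1def]; exact FZbern hp1 hp2 hs.le hsr
      have h8 : (p - 1) * B * (r - s) ^ 2 ≤ D := by
        have u := mul_le_mul_of_nonneg_right hbR (sub_nonneg.mpr hsr)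
        rw [hDdef]; linarith [u]
      rcases le_or_gt r (2 * s) with h2s | h2s
      · have hb2 : (2:ℝ) ^ (p - 2) * A ≤ B := by
          have h1 : ((2 * s):ℝ) ^ (p - 2) ≤ r ^ (p - 2) :=
            Real.rpow_le_rpow_of_nonpos hrpos h2s hpneg
          rw [Real.mul_rpow (by norm_num : (0:ℝ) ≤ 2) hs.le] at h1
          rw [hAdef, hBdef]; exact h1
        have hφA : φ₁ ≤ A * (s - r) ^ 2 := by rw [hφ₁def]; exact min_le_right _ _
        have c1 : a * φ₁ ≤ a * (A * (s - r) ^ 2) := mul_le_mul_of_nonneg_left hφA ha0.le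
        have c2 : a * (A * (s - r) ^ 2) ≤ (p - 1) * (2:ℝ) ^ (p - 2) * (A * (s - r) ^ 2) :=
          mul_le_mul_of_nonneg_right haB (mul_nonneg hA.le (sq_nonneg _))
        have c3 : (p - 1) * ((2:ℝ) ^ (p - 2) * A) ≤ (p - 1) * B :=
          mul_le_mul_of_nonneg_left hb2 hp10.le
        have c4 := mul_le_mul_of_nonneg_right c3 (sq_nonneg (s - r))
        linarith [c1, c2, c4, h8]
      · have hrs2 : r / 2 ≤ r - s := by linarith
        have hrs0 : (0:ℝ) < r / 2 := by linarith
        have hdpos : (0:ℝ) < r - s := by linarith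
        have hφp : φ₁ ≤ (r - s) ^ p := by
          have e1 : (((s - r) ^ 2 : ℝ)) ^ (p / 2) = (r - s) ^ p := by
            rw [show ((s - r) ^ 2 : ℝ) = (r - s) ^ 2 by ring,
              ← Real.rpow_natCast (r - s) 2, ← Real.rpow_mul hdpos.le,
              show ((2:ℕ):ℝ) * (p / 2) = p by push_cast; ring]
          rw [hφ₁def]
          exact le_of_le_of_eq (min_le_left _ _) e1
        have hshift : (r - s) ^ p = (r - s) ^ (p - 2) * (r - s) ^ 2 := by
          rw [← Real.rpow_natCast (r - s) 2, ← Real.rpow_add hdpos]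
          norm_num
        have hanti : (r - s) ^ (p - 2) ≤ (r / 2) ^ (p - 2) :=
          Real.rpow_le_rpow_of_nonpos hrs0 hrs2 hpneg
        have hhalfB : (2:ℝ) ^ (p - 2) * (r / 2) ^ (p - 2) = B := by
          rw [hBdef, ← Real.mul_rpow (by norm_num : (0:ℝ) ≤ 2) hrs0.le,
            show (2:ℝ) * (r / 2) = r by ring]
        have heq : a * (r / 2) ^ (p - 2) = (p - 1) * B / 8 := by
          rw [hadef, ← hhalfB]
          have hc := h2cube
          field_simp
          linear_combination hc
        have c1 : a * φ₁ ≤ a * ((r - s) ^ (p - 2) * (r - s) ^ 2) := by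
          rw [← hshift]; exact mul_le_mul_of_nonneg_left hφp ha0.le
        have c2 : a * ((r - s) ^ (p - 2) * (r - s) ^ 2) ≤ a * ((r / 2) ^ (p - 2) * (r - s) ^ 2) :=
          mul_le_mul_of_nonneg_left (mul_le_mul_of_nonneg_right hanti (sq_nonneg _)) ha0.le
        have c3 : a * ((r / 2) ^ (p - 2) * (r - s) ^ 2) = (p - 1) * B / 8 * (r - s) ^ 2 := by
          rw [← mul_assoc, heq]
        have c4 : (p - 1) * B / 8 * (r - s) ^ 2 ≤ (p - 1) * B * (r - s) ^ 2 := by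
          have u := mul_nonneg (mul_nonneg hp10.le hB) (sq_nonneg (r - s))
          linarith [u]
        linarith [c1, c2, c3.le, c3.ge, c4, h8]
    · have hbS : (p - 1) * A * (s - r) ≤ A1 - B1 := by
        rw [hAdef, hA1def, hB1def]; exact FZbern hp1 hp2 hr hsr.le
      have h8 : (p - 1) * A * (s - r) ^ 2 ≤ D := by
        have u := mul_le_mul_of_nonneg_right hbS (sub_nonneg.mpr hsr.le)
        rw [hDdef]; linarith [u]
      have hφA : φ₁ ≤ A * (s - r) ^ 2 := by rw [hφ₁def]; exact min_le_right _ _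
      have c1 : a * φ₁ ≤ a * (A * (s - r) ^ 2) := mul_le_mul_of_nonneg_left hφA ha0.le
      have c2 : a * (A * (s - r) ^ 2) ≤ (p - 1) * (A * (s - r) ^ 2) :=
        mul_le_mul_of_nonneg_right haa (mul_nonneg hA.le (sq_nonneg _))
      linarith [c1, c2, h8]
  -- hT2 : a * φ₂ ≤ D + 2 * ω₁ * δ
  have hT2 : a * φ₂ ≤ D + 2 * ω₁ * δ := by
    rcases le_or_gt s r with hsr | hsr
    · have hrpos : 0 < r := lt_of_lt_of_le hs hsr
      have hω₁B : ω₁ = B := by rw [hω₁def, if_pos hsr]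
      rcases le_or_gt r (2 * s) with h2s | h2s
      · have hb2 : (2:ℝ) ^ (p - 2) * A ≤ B := by
          have h1 : ((2 * s):ℝ) ^ (p - 2) ≤ r ^ (p - 2) :=
            Real.rpow_le_rpow_of_nonpos hrpos h2s hpneg
          rw [Real.mul_rpow (by norm_num : (0:ℝ) ≤ 2) hs.le] at h1
          rw [hAdef, hBdef]; exact h1
        have hφA : φ₂ ≤ A * (2 * δ) := by rw [hφ₂def]; exact min_le_right _ _
        have c1 : a * φ₂ ≤ a * (A * (2 * δ)) := mul_le_mul_of_nonneg_left hφA ha0.le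
        have c2 : a * (A * (2 * δ)) ≤ (2:ℝ) ^ (p - 2) * (A * (2 * δ)) :=
          mul_le_mul_of_nonneg_right haa2 (mul_nonneg hA.le hδδ)
        have c3 := mul_le_mul_of_nonneg_right hb2 hδδ
        rw [hω₁B]
        linarith [c1, c2, c3, hD0]
      · have hbR : (p - 1) * B * (r - s) ≤ B1 - A1 := by
          rw [hBdef, hB1def, hA1def]; exact FZbern hp1 hp2 hs.le hsr
        have h8 : (p - 1) * B * (r - s) ^ 2 ≤ D := by
          have u := mul_le_mul_of_nonneg_right hbR (sub_nonneg.mpr hsr)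
          rw [hDdef]; linarith [u]
        have hrs2 : r / 2 ≤ r - s := by linarith
        have hrs0 : (0:ℝ) < r / 2 := by linarith
        have hq : (r / 2) * (r / 2) ≤ (r - s) * (r - s) :=
          mul_self_le_mul_self hrs0.le hrs2
        have h9 : (p - 1) / 4 * r ^ p ≤ D := by
          have u := mul_le_mul_of_nonneg_left hq (mul_nonneg hp10.le hB)
          have e : (p - 1) / 4 * (B * r ^ 2) = (p - 1) / 4 * r ^ p := by rw [hBr2]
          linarith [u, e.le, e.ge, h8]
        have hφ2r : φ₂ ≤ 2 * r ^ p := by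
          have hle : 2 * δ ≤ 2 * r ^ 2 := by
            have u := mul_le_mul_of_nonneg_left h2s.le (by linarith : (0:ℝ) ≤ 2 * r)
            have v : 2 * δ ≤ 4 * (s * r) := by linarith
            linarith [u, v]
          have m1 : (2 * δ) ^ (p / 2) ≤ (2 * r ^ 2) ^ (p / 2) :=
            Real.rpow_le_rpow hδδ hle (by linarith)
          have m2 : ((2:ℝ) * r ^ 2) ^ (p / 2) ≤ 2 * ((r ^ 2 : ℝ)) ^ (p / 2) :=
            hdb (r ^ 2) (sq_nonneg r)
          have m3 : ((r ^ 2 : ℝ)) ^ (p / 2) = r ^ p := by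
            rw [← Real.rpow_natCast r 2, ← Real.rpow_mul hr,
              show ((2:ℕ):ℝ) * (p / 2) = p by push_cast; ring]
          have := min_le_left ((2 * δ) ^ (p / 2)) (A * (2 * δ))
          rw [hφ₂def]
          linarith [this, m1, m2, m3.le, m3.ge]
        have hr0p : (0:ℝ) ≤ r ^ p := Real.rpow_nonneg hr _
        have h2a : 2 * a ≤ (p - 1) / 4 := by linarith [ha8]
        have c1 : a * φ₂ ≤ a * (2 * r ^ p) := mul_le_mul_of_nonneg_left hφ2r ha0.le
        have c2 := mul_le_mul_of_nonneg_right h2a hr0p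
        have c3 := mul_nonneg hω₁0 hδ0
        linarith [c1, c2, c3, h9]
    · have hω₁A : ω₁ = A := by rw [hω₁def, if_neg (not_le.mpr hsr)]
      have hφA : φ₂ ≤ A * (2 * δ) := by rw [hφ₂def]; exact min_le_right _ _
      have c1 : a * φ₂ ≤ 1 * (A * (2 * δ)) := mul_le_mul ha1 hφA hφ₂0 zero_le_one
      rw [hω₁A]
      linarith [c1, hD0]
  -- hM : the min is controlled by φ₁ and φ₂
  have hynp : yn ^ p = ((yn ^ 2 : ℝ)) ^ (p / 2) := by
    rw [← Real.rpow_natCast yn 2, ← Real.rpow_mul hyn,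
      show ((2:ℕ):ℝ) * (p / 2) = p by push_cast; ring]
  have hM : min (yn ^ p) (A * yn ^ 2) ≤ 2 * φ₁ + 2 * φ₂ := by
    rcases le_or_gt ((s - r) ^ 2) (2 * δ) with hc | hc
    · have hyle : yn ^ 2 ≤ 2 * (2 * δ) := by rw [hyd]; linarith
      have m1 : ((yn ^ 2 : ℝ)) ^ (p / 2) ≤ ((2 * (2 * δ) : ℝ)) ^ (p / 2) :=
        Real.rpow_le_rpow (sq_nonneg _) hyle (by linarith)
      have m2 := hdb (2 * δ) hδδ
      have u1 : yn ^ p ≤ 2 * (2 * δ) ^ (p / 2) := by rw [hynp]; linarith [m1, m2]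
      have u2 : A * yn ^ 2 ≤ 2 * (A * (2 * δ)) := by
        have u := mul_le_mul_of_nonneg_left hyle hA.le
        linarith [u]
      have hm : min (yn ^ p) (A * yn ^ 2) ≤ 2 * φ₂ := by
        rcases le_total ((2 * δ) ^ (p / 2)) (A * (2 * δ)) with hm' | hm'
        · rw [hφ₂def, min_eq_left hm']
          exact le_trans (min_le_left _ _) u1
        · rw [hφ₂def, min_eq_right hm']
          exact le_trans (min_le_right _ _) u2
      linarith [hφ₁0, hm]
    · have hyle : yn ^ 2 ≤ 2 * ((s - r) ^ 2) := by rw [hyd]; linarith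
      have m1 : ((yn ^ 2 : ℝ)) ^ (p / 2) ≤ ((2 * ((s - r) ^ 2) : ℝ)) ^ (p / 2) :=
        Real.rpow_le_rpow (sq_nonneg _) hyle (by linarith)
      have m2 := hdb ((s - r) ^ 2) (sq_nonneg _)
      have u1 : yn ^ p ≤ 2 * ((s - r) ^ 2) ^ (p / 2) := by rw [hynp]; linarith [m1, m2]
      have u2 : A * yn ^ 2 ≤ 2 * (A * (s - r) ^ 2) := by
        have u := mul_le_mul_of_nonneg_left hyle hA.le
        linarith [u]
      have hm : min (yn ^ p) (A * yn ^ 2) ≤ 2 * φ₁ := by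
        rcases le_total (((s - r) ^ 2) ^ (p / 2)) (A * (s - r) ^ 2) with hm' | hm'
        · rw [hφ₁def, min_eq_left hm']
          exact le_trans (min_le_left _ _) u1
        · rw [hφ₁def, min_eq_right hm']
          exact le_trans (min_le_right _ _) u2
      linarith [hφ₂0, hm]
  -- kappa'
  set K := min κ 1 with hKdef
  clear_value K
  have hK0 : 0 < K := by rw [hKdef]; exact lt_min hκ one_pos
  have hK1 : K ≤ 1 := by rw [hKdef]; exact min_le_right _ _
  have hKκ : K ≤ κ := by rw [hKdef]; exact min_le_left _ _
  -- h3
  have hM0 : 0 ≤ min (yn ^ p) (A * yn ^ 2) :=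
    le_min (Real.rpow_nonneg hyn _) (mul_nonneg hA.le (sq_nonneg _))
  have h3 : K * (a / 4) * min (yn ^ p) (A * yn ^ 2) ≤ K * (D + 2 * ω₁ * δ) := by
    have e1 : a / 4 * min (yn ^ p) (A * yn ^ 2) ≤ a / 4 * (2 * φ₁ + 2 * φ₂) :=
      mul_le_mul_of_nonneg_left hM (by linarith [ha0])
    have e2 : a / 4 * (2 * φ₁ + 2 * φ₂) ≤ D + ω₁ * δ := by linarith [hT1, hT2]
    have e3 : D + ω₁ * δ ≤ D + 2 * ω₁ * δ := by
      have := mul_nonneg hω₁0 hδ0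
      linarith [this]
    have e4 : a / 4 * min (yn ^ p) (A * yn ^ 2) ≤ D + 2 * ω₁ * δ := by
      linarith [e1, e2, e3]
    calc K * (a / 4) * min (yn ^ p) (A * yn ^ 2)
        = K * (a / 4 * min (yn ^ p) (A * yn ^ 2)) := by ring
      _ ≤ K * (D + 2 * ω₁ * δ) := mul_le_mul_of_nonneg_left e4 hK0.le
  -- h1
  have h1 : (1 - κ) * ω₁ * yn ^ 2 + (p - 2) * (1 - κ) * ω₂ * (s - r) ^ 2 ≤
      (1 - K) * D + 2 * (1 - K) * (ω₁ * δ) := by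
    have hX0 : 0 ≤ (ω₁ + (p - 2) * ω₂) * (s - r) ^ 2 := mul_nonneg hE0 (sq_nonneg _)
    have u1 : (1 - κ) * ((ω₁ + (p - 2) * ω₂) * (s - r) ^ 2) ≤
        (1 - K) * ((ω₁ + (p - 2) * ω₂) * (s - r) ^ 2) :=
      mul_le_mul_of_nonneg_right (by linarith [hKκ]) hX0
    have u2 : (1 - K) * ((ω₁ + (p - 2) * ω₂) * (s - r) ^ 2) ≤ (1 - K) * D :=
      mul_le_mul_of_nonneg_left hbase (by linarith [hK1])
    have hωδ : 0 ≤ ω₁ * δ := mul_nonneg hω₁0 hδ0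
    have u3 : (1 - κ) * (2 * (ω₁ * δ)) ≤ (1 - K) * (2 * (ω₁ * δ)) :=
      mul_le_mul_of_nonneg_right (by linarith [hKκ]) (by linarith [hωδ])
    have hEκ : (1 - κ) * ω₁ * yn ^ 2 =
        (1 - κ) * ((ω₁ + (p - 2) * ω₂) * (s - r) ^ 2) + (1 - κ) * (2 * (ω₁ * δ))
          - (p - 2) * (1 - κ) * ω₂ * (s - r) ^ 2 := by
      rw [hyd]; ring
    linarith [u1, u2, u3, hEκ.le, hEκ.ge]
  -- the key identity
  have hId : B * (r ^ 2 - t) - A * (t - s ^ 2) = D + (A + B) * δ := by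
    rw [hDdef, hδdef]
    linear_combination (s - r) * hAs + (r - s) * hBr
  linarith [hId.le, hId.ge, h1, hsumδ, h3]

/-- Vectorial inequality for `1 < p < 2` with weights `ω₁, ω₂`. -/
theorem stmt3 (p κ : ℝ) (hp1 : 1 < p) (hp2 : p < 2) (hκ : 0 < κ) :
    ∃ c₁ : ℝ, 0 < c₁ ∧
      ∀ (n : ℕ), 1 ≤ n → ∀ x y : En n, x ≠ 0 →
        ‖x + y‖ ^ (p - 2) * ⟪x + y, y⟫ ≥
          ‖x‖ ^ (p - 2) * ⟪x, y⟫ + (1 - κ) * w1 n p x (x + y) * ‖y‖ ^ 2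
            + (p - 2) * (1 - κ) * w2 n p x (x + y) * (‖x‖ - ‖x + y‖) ^ 2
            + c₁ * min (‖y‖ ^ p) (‖x‖ ^ (p - 2) * ‖y‖ ^ 2) := by
  refine ⟨min κ 1 * ((p - 1) * (2:ℝ) ^ (p - 5) / 4),
    mul_pos (lt_min hκ one_pos)
      (div_pos (mul_pos (by linarith) (Real.rpow_pos_of_pos two_pos _)) (by norm_num)), ?_⟩
  intro n hn x y hx
  have hs : 0 < ‖x‖ := norm_pos_iff.mpr hx
  have hxy : ‖x + y‖ ^ 2 = ‖x‖ ^ 2 + 2 * ⟪x, y⟫ + ‖y‖ ^ 2 := norm_add_sq_real x y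
  have hx2 : ⟪x, x + y⟫ = ‖x‖ ^ 2 + ⟪x, y⟫ := by
    rw [inner_add_right, real_inner_self_eq_norm_sq]
  have e1 : ⟪x + y, y⟫ = ‖x + y‖ ^ 2 - ⟪x, x + y⟫ := by
    rw [inner_add_left, real_inner_self_eq_norm_sq, hx2, hxy]; ring
  have e2 : ⟪x, y⟫ = ⟪x, x + y⟫ - ‖x‖ ^ 2 := by rw [hx2]; ring
  have hy2 : ‖y‖ ^ 2 = ‖x‖ ^ 2 + ‖x + y‖ ^ 2 - 2 * ⟪x, x + y⟫ := by
    rw [hx2, hxy]; ring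
  have key := FZmaster p κ hp1 hp2 hκ ‖x‖ ‖x + y‖ ⟪x, x + y⟫ ‖y‖ hs (norm_nonneg _)
    (norm_nonneg _) (abs_real_inner_le_norm x (x + y)) hy2
  simp only [w1, w2]
  rw [e1, e2]
  exact key
end
end

section
/- Let p ≥ 2 and κ > 0. There exist constants c₂ = c₂(p,κ) > 0 and c₃ = c₃(p) ∈ (0,1] such that, with the weights ω₃ and ω₄ defined using this constant c₃, for all x, y ∈ ℝⁿ with x ≠ 0: |x+y|^{p−2}(x+y)·y ≥ |x|^{p−2}x·y + (1−κ)·ω₃(x, x+y)·|y|² + (p−2)(1−κ)·ω₄(x, x+y)·(|x| − |x+y|)² + c₂·|y|^p. -/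
open MeasureTheory Real Filter RealInnerProductSpace

noncomputable section

/-- Bernoulli-type inequality: for `q ≥ 1`, `a ≥ 0`, `b > 0`,
`b^q + q b^{q-1}(a-b) ≤ a^q`. -/
lemma bern_aux {q a b : ℝ} (hq : 1 ≤ q) (ha : 0 ≤ a) (hb : 0 < b) :
    b ^ q + q * b ^ (q - 1) * (a - b) ≤ a ^ q := by
  have hs : (-1 : ℝ) ≤ a / b - 1 := by
    have : 0 ≤ a / b := div_nonneg ha hb.le
    linarith
  have h := one_add_mul_self_le_rpow_one_add hs hq
  rw [add_sub_cancel] at h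
  have hbq : (0:ℝ) < b ^ q := Real.rpow_pos_of_pos hb q
  have hd : (a / b) ^ q = a ^ q / b ^ q := Real.div_rpow ha hb.le q
  have h2 : b ^ q * (1 + q * (a / b - 1)) ≤ a ^ q := by
    calc b ^ q * (1 + q * (a / b - 1)) ≤ b ^ q * ((a/b)^q) :=
          mul_le_mul_of_nonneg_left h hbq.le
      _ = a ^ q := by rw [hd]; field_simp
  have hb1 : b ^ q = b ^ (q - 1) * b := by
    rw [show q = (q-1)+1 by ring, Real.rpow_add_one hb.ne']
    ring_nf
  have key : b ^ q * (a / b - 1) = b ^ (q - 1) * (a - b) := by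
    rw [hb1]; field_simp
  calc b ^ q + q * b ^ (q - 1) * (a - b) = b ^ q * (1 + q * (a / b - 1)) := by
        linear_combination (-q) * key
    _ ≤ a ^ q := h2

set_option maxHeartbeats 1000000 in
/-- Scalar core of the vectorial inequality. -/
lemma scalar_main (p κ κ' c3 c2 : ℝ) (hp : 2 ≤ p) (hκ'0 : 0 < κ') (hκ'1 : κ' ≤ 1)
    (hκ'κ : κ' ≤ κ) (hc3pos : 0 < c3)
    (hc3half : c3 ^ (1/(p-1)) ≤ 1/2)
    (hc3id : (p-1) * (2:ℝ) ^ (p-2) * c3 = (2:ℝ) ^ (1-p) / 4)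
    (hc2a : c2 ≤ κ' * (2:ℝ) ^ (1-p)) (hc2b : c2 ≤ (2:ℝ) ^ (1-p) / 2)
    (s t Y c : ℝ) (hs : 0 < s) (h0t : 0 ≤ t) (h0Y : 0 ≤ Y)
    (hc_le : c ≤ s * t) (hY2 : Y^2 = s^2 + t^2 - 2*c)
    (hstY : s - t ≤ Y) (hYst : Y ≤ s + t) :
    s^(p-2) * (c - s^2)
      + (1-κ) * (if s ≤ t then s^(p-2) else
          if c3 ^ (1/(p-1)) * s ≤ t then t^(p-1)/s else c3 * s^(p-2)) * Y^2
      + (p-2) * (1-κ) * (if s ≤ t then s^(p-2) else t^(p-1)/s) * (s-t)^2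
      + c2 * Y^p ≤ t^(p-2) * (t^2 - c) := by
  have hp1 : (1:ℝ) < p := by linarith
  have hp0 : p - 1 ≠ 0 := by intro h; rw [sub_eq_zero] at h; linarith [h.symm]
  have hpne : p ≠ 0 := by intro h; rw [h] at hp; norm_num at hp
  have hm0 : (0:ℝ) < (2:ℝ) ^ (1-p) := Real.rpow_pos_of_pos two_pos _
  -- rpow atoms and identities
  have hA0 : 0 ≤ s ^ (p-2) := Real.rpow_nonneg hs.le _
  have hB0 : 0 ≤ t ^ (p-2) := Real.rpow_nonneg h0t _
  have hE0 : 0 ≤ Y ^ (p-2) := Real.rpow_nonneg h0Y _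
  have es1 : s ^ (p-1) = s ^ (p-2) * s := by
    rw [show p - 1 = (p-2) + 1 by ring, Real.rpow_add_one hs.ne']
  have es2 : s ^ p = s ^ (p-2) * s^2 := by
    rw [← Real.rpow_natCast s 2, ← Real.rpow_add hs]
    congr 1; push_cast; ring
  have et1 : t ^ (p-1) = t ^ (p-2) * t := by
    rcases eq_or_lt_of_le h0t with h | h
    · rw [← h, Real.zero_rpow hp0]; ring
    · rw [show p - 1 = (p-2) + 1 by ring, Real.rpow_add_one h.ne']
  have et2 : t ^ p = t ^ (p-2) * t^2 := by
    rcases eq_or_lt_of_le h0t with h | h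
    · rw [← h, Real.zero_rpow hpne]; ring
    · rw [← Real.rpow_natCast t 2, ← Real.rpow_add h]
      congr 1; push_cast; ring
  have eY : Y ^ p = Y ^ (p-2) * Y^2 := by
    rcases eq_or_lt_of_le h0Y with h | h
    · rw [← h, Real.zero_rpow hpne]; ring
    · rw [← Real.rpow_natCast Y 2, ← Real.rpow_add h]
      congr 1; push_cast; ring
  -- Bernoulli instances
  have hbernA : s^(p-2)*s + (p-1)*(s^(p-2))*(t-s) ≤ t^(p-2)*t := by
    have h := bern_aux (show (1:ℝ) ≤ p - 1 by linarith) h0t hs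
    rw [show p - 1 - 1 = p - 2 by ring, es1, et1] at h
    linarith
  have hbernB : t^(p-2)*t^2 + p*(t^(p-2)*t)*(s-t) ≤ s^(p-2)*s^2 := by
    rcases eq_or_lt_of_le h0t with h | h
    · rw [← h]; ring_nf; positivity
    · have hb := bern_aux (show (1:ℝ) ≤ p by linarith) hs.le h
      rw [es2, et2, et1] at hb
      linarith
  -- weight ω₄
  set W : ℝ := if s ≤ t then s^(p-2) else t^(p-1)/s with hW
  have hω4 : W = if s ≤ t then s^(p-2) else t^(p-2)*t/s := by
    rw [hW, et1]
  have hω4nn : 0 ≤ W := by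
    rw [hω4]; split_ifs
    · exact hA0
    · positivity
  have hslope : 2 * W ≤ s^(p-2) + t^(p-2) := by
    rw [hω4]; split_ifs with hst
    · have : s^(p-2) ≤ t^(p-2) := Real.rpow_le_rpow hs.le hst (by linarith)
      linarith
    · push_neg at hst
      have h1 : t^(p-2) ≤ s^(p-2) := Real.rpow_le_rpow h0t hst.le (by linarith)
      have h2 : t^(p-2)*t/s ≤ t^(p-2) := by
        rw [div_le_iff₀ hs]
        linarith [mul_le_mul_of_nonneg_left hst.le hB0]
      linarith
  -- scalar core inequality
  have hcore : (p-1) * W * (s-t)^2 ≤ (s^(p-2)*s - t^(p-2)*t)*(s-t) := by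
    rw [hω4]; split_ifs with hst
    · have h := mul_le_mul_of_nonneg_right hbernA (sub_nonneg.2 hst)
      linarith [h]
    · push_neg at hst
      have key2 : (p-1)*(t^(p-2)*t)*(s-t)^2 ≤ (s^(p-2)*s - t^(p-2)*t)*(s-t)*s := by
        have h2 : (p-1)*(t^(p-2)*t)*(s-t) ≤ s^(p-2)*s^2 - t^(p-2)*t*s := by
          linarith [hbernB]
        have h3 := mul_le_mul_of_nonneg_right h2 (le_of_lt (sub_pos.2 hst))
        linarith [h3]
      calc (p-1) * (t^(p-2)*t/s) * (s-t)^2 = ((p-1)*(t^(p-2)*t)*(s-t)^2)/s := by ring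
        _ ≤ ((s^(p-2)*s - t^(p-2)*t)*(s-t)*s)/s :=
            div_le_div_of_nonneg_right key2 hs.le
        _ = (s^(p-2)*s - t^(p-2)*t)*(s-t) := by field_simp
  -- Lemma A : D ≥ ω₄ (Y² + (p-2)(s-t)²)
  have hLemA : W * Y^2 + (p-2) * W * (s-t)^2 ≤
      s^(p-2)*s^2 + t^(p-2)*t^2 - (s^(p-2)+t^(p-2))*c := by
    have hprod : 0 ≤ (s*t - c)*(s^(p-2)+t^(p-2)-2*W) :=
      mul_nonneg (by linarith) (by linarith)
    rw [hY2]
    linarith only [hcore, hprod]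
  -- Lemma P : D ≥ m E Y²
  have hL3 : 0 ≤ (s^(p-2)-t^(p-2))*(s^2-t^2) := by
    rcases le_total s t with h | h
    · have h1 : s^(p-2) ≤ t^(p-2) := Real.rpow_le_rpow hs.le h (by linarith)
      have h2 : s^2 ≤ t^2 := by nlinarith
      linarith [mul_nonneg (sub_nonneg.2 h1) (sub_nonneg.2 h2)]
    · have h1 : t^(p-2) ≤ s^(p-2) := Real.rpow_le_rpow h0t h (by linarith)
      have h2 : t^2 ≤ s^2 := by nlinarith
      linarith [mul_nonneg (sub_nonneg.2 h1) (sub_nonneg.2 h2)]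
  have hQ : (1/2)*(s^(p-2)+t^(p-2))*Y^2 ≤
      s^(p-2)*s^2 + t^(p-2)*t^2 - (s^(p-2)+t^(p-2))*c := by
    rw [hY2]; linarith only [hL3]
  have hEbound : (2:ℝ)^(2-p) * Y^(p-2) ≤ s^(p-2) + t^(p-2) := by
    have h1 : Y/2 ≤ max s t := by
      rcases le_total s t with h | h
      · rw [max_eq_right h]; linarith
      · rw [max_eq_left h]; linarith
    have h2 : (Y/2)^(p-2) ≤ (max s t)^(p-2) :=
      Real.rpow_le_rpow (by positivity) h1 (by linarith)
    have h3 : (Y/2)^(p-2) = (2:ℝ)^(2-p) * Y^(p-2) := by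
      rw [Real.div_rpow h0Y (by norm_num : (0:ℝ) ≤ 2), div_eq_mul_inv,
        ← Real.rpow_neg (by norm_num : (0:ℝ) ≤ 2), show -(p-2) = 2-p by ring]
      ring
    have h4 : (max s t)^(p-2) ≤ s^(p-2) + t^(p-2) := by
      rcases max_cases s t with ⟨h, _⟩ | ⟨h, _⟩ <;> rw [h] <;> linarith
    rw [← h3]; linarith
  have hm2 : (2:ℝ)^(1-p) = (1/2) * (2:ℝ)^(2-p) := by
    rw [show (2:ℝ)^(2-p) = (2:ℝ)^((1-p)+1) by ring_nf,
      Real.rpow_add_one (by norm_num : (2:ℝ) ≠ 0)]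
    ring
  have hP : (2:ℝ)^(1-p) * (Y^(p-2) * Y^2) ≤
      s^(p-2)*s^2 + t^(p-2)*t^2 - (s^(p-2)+t^(p-2))*c := by
    have h1 : (2:ℝ)^(1-p) * (Y^(p-2) * Y^2) ≤ (1/2)*(s^(p-2)+t^(p-2))*Y^2 := by
      rw [hm2]
      linarith only [mul_le_mul_of_nonneg_right hEbound (sq_nonneg Y)]
    linarith only [hQ, h1]
  -- main reduction
  rw [eY]
  have hEYnn : 0 ≤ Y^(p-2) * Y^2 := mul_nonneg hE0 (sq_nonneg Y)
  have hk4 : (p-2)*(1-κ) * (W * (s-t)^2) ≤ (p-2)*(1-κ') * (W * (s-t)^2) := by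
    apply mul_le_mul_of_nonneg_right _ (mul_nonneg hω4nn (sq_nonneg _))
    have := mul_nonneg (show (0:ℝ) ≤ p - 2 by linarith) (show (0:ℝ) ≤ κ - κ' by linarith)
    linarith only [this]
  rcases le_or_gt (c3 ^ (1/(p-1)) * s) t with hcase | hcase
  · -- regime where ω₃ = ω₄
    have hω34 : (if s ≤ t then s^(p-2) else
        if c3 ^ (1/(p-1)) * s ≤ t then t^(p-1)/s else c3 * s^(p-2)) = W := by
      rw [hW]
      by_cases h1 : s ≤ t
      · rw [if_pos h1, if_pos h1]
      · rw [if_neg h1, if_neg h1, if_pos hcase]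
    rw [hω34]
    have hk3 : (1-κ) * (W * Y^2) ≤ (1-κ') * (W * Y^2) := by
      apply mul_le_mul_of_nonneg_right _ (mul_nonneg hω4nn (sq_nonneg _))
      linarith only [hκ'κ]
    have e1 : (1-κ') * (W * Y^2 + (p-2) * W * (s-t)^2) ≤
        (1-κ') * (s^(p-2)*s^2 + t^(p-2)*t^2 - (s^(p-2)+t^(p-2))*c) :=
      mul_le_mul_of_nonneg_left hLemA (by linarith)
    have e2 : κ' * ((2:ℝ)^(1-p) * (Y^(p-2) * Y^2)) ≤
        κ' * (s^(p-2)*s^2 + t^(p-2)*t^2 - (s^(p-2)+t^(p-2))*c) :=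
      mul_le_mul_of_nonneg_left hP hκ'0.le
    have e3 : c2 * (Y^(p-2) * Y^2) ≤ κ' * ((2:ℝ)^(1-p) * (Y^(p-2) * Y^2)) := by
      have : c2 * (Y^(p-2) * Y^2) ≤ (κ' * (2:ℝ)^(1-p)) * (Y^(p-2) * Y^2) :=
        mul_le_mul_of_nonneg_right hc2a hEYnn
      linarith only [this]
    linarith only [hk3, hk4, e1, e2, e3]
  · -- regime where ω₃ = c₃ s^(p-2)
    have hts : t < s := by
      have := mul_le_mul_of_nonneg_right hc3half hs.le
      linarith only [hcase, this, hs]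
    rw [if_neg (not_le.2 hts), if_neg (not_le.2 hcase)]
    have hω4b : W ≤ c3 * s^(p-2) := by
      rw [hW, if_neg (not_le.2 hts), div_le_iff₀ hs]
      have h1 : t ^ (p-1) ≤ (c3 ^ (1/(p-1)) * s) ^ (p-1) :=
        Real.rpow_le_rpow h0t hcase.le (by linarith)
      have h2 : (c3 ^ (1/(p-1)) * s) ^ (p-1) = c3 * s^(p-1) := by
        rw [Real.mul_rpow (Real.rpow_nonneg hc3pos.le _) hs.le,
          ← Real.rpow_mul hc3pos.le, show (1/(p-1))*(p-1) = 1 by field_simp, Real.rpow_one]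
      rw [h2, es1] at h1
      linarith only [h1]
    have hs2Y : s ≤ 2 * Y := by
      have h1 : t ≤ (1/2) * s := by
        have := mul_le_mul_of_nonneg_right hc3half hs.le
        linarith only [hcase, this]
      linarith only [h1, hstY]
    have hst2 : (s-t)^2 ≤ Y^2 := sq_le_sq' (by linarith) hstY
    have hA2Y : s^(p-2) ≤ (2:ℝ)^(p-2) * Y^(p-2) := by
      have h1 : s^(p-2) ≤ (2*Y)^(p-2) := Real.rpow_le_rpow hs.le hs2Y (by linarith)
      rwa [Real.mul_rpow (by norm_num : (0:ℝ) ≤ 2) h0Y] at h1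
    have g1 : (1-κ) * (c3 * s^(p-2)) * Y^2 ≤ c3 * s^(p-2) * Y^2 := by
      apply mul_le_mul_of_nonneg_right _ (sq_nonneg Y)
      have hκpos : 0 < κ := lt_of_lt_of_le hκ'0 hκ'κ
      linarith only [mul_nonneg hκpos.le (mul_nonneg hc3pos.le hA0)]
    have g2 : (p-2)*(1-κ) * (W * (s-t)^2) ≤ (p-2) * (c3 * s^(p-2) * Y^2) := by
      have b1 : W * (s-t)^2 ≤ c3 * s^(p-2) * Y^2 := by
        calc W * (s-t)^2 ≤ W * Y^2 := mul_le_mul_of_nonneg_left hst2 hω4nn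
          _ ≤ c3 * s^(p-2) * Y^2 := mul_le_mul_of_nonneg_right hω4b (sq_nonneg Y)
      have b2 : (p-2)*(1-κ) ≤ p-2 := by
        have hκpos : 0 < κ := lt_of_lt_of_le hκ'0 hκ'κ
        linarith only [mul_nonneg (show (0:ℝ) ≤ p-2 by linarith) hκpos.le]
      have b3 : 0 ≤ W * (s-t)^2 := mul_nonneg hω4nn (sq_nonneg _)
      calc (p-2)*(1-κ) * (W * (s-t)^2) ≤ (p-2) * (W * (s-t)^2) :=
            mul_le_mul_of_nonneg_right b2 b3
        _ ≤ (p-2) * (c3 * s^(p-2) * Y^2) := mul_le_mul_of_nonneg_left b1 (by linarith)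
    have g3 : (p-1) * (c3 * s^(p-2) * Y^2) ≤ ((2:ℝ)^(1-p)/4) * (Y^(p-2) * Y^2) := by
      have b1 : c3 * s^(p-2) ≤ c3 * ((2:ℝ)^(p-2) * Y^(p-2)) :=
        mul_le_mul_of_nonneg_left hA2Y hc3pos.le
      have b2 : (p-1) * (c3 * ((2:ℝ)^(p-2) * Y^(p-2))) = ((2:ℝ)^(1-p)/4) * Y^(p-2) := by
        linear_combination Y^(p-2) * hc3id
      have b3 := mul_le_mul_of_nonneg_left
        (mul_le_mul_of_nonneg_right b1 (sq_nonneg Y)) (show (0:ℝ) ≤ p-1 by linarith)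
      have b4 : ((p-1) * (c3 * ((2:ℝ)^(p-2) * Y^(p-2)))) * Y^2
          = (((2:ℝ)^(1-p)/4) * Y^(p-2)) * Y^2 := by
        linear_combination Y^2 * b2
      linarith only [b3, b4]
    have g4 : c2 * (Y^(p-2) * Y^2) ≤ ((2:ℝ)^(1-p)/2) * (Y^(p-2) * Y^2) :=
      mul_le_mul_of_nonneg_right hc2b hEYnn
    linarith only [hP, g1, g2, g3, g4, mul_nonneg hm0.le hEYnn]

set_option maxHeartbeats 1000000 in
/-- Vectorial inequality for `p ≥ 2` with weights `ω₃, ω₄` built from a constant `c₃ ∈ (0,1]`. -/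
theorem stmt4 (p κ : ℝ) (hp : 2 ≤ p) (hκ : 0 < κ) :
    ∃ c₂ c₃ : ℝ, 0 < c₂ ∧ 0 < c₃ ∧ c₃ ≤ 1 ∧
      ∀ (n : ℕ), 1 ≤ n → ∀ x y : En n, x ≠ 0 →
        ‖x + y‖ ^ (p - 2) * ⟪x + y, y⟫ ≥
          ‖x‖ ^ (p - 2) * ⟪x, y⟫ + (1 - κ) * w3 n p c₃ x (x + y) * ‖y‖ ^ 2
            + (p - 2) * (1 - κ) * w4 n p x (x + y) * (‖x‖ - ‖x + y‖) ^ 2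
            + c₂ * ‖y‖ ^ p := by
  have hp1 : (1:ℝ) < p := by linarith
  have hp0 : p - 1 ≠ 0 := by intro h; rw [sub_eq_zero] at h; linarith [h.symm]
  set m : ℝ := (2:ℝ) ^ (1 - p) with hm
  have hm0 : 0 < m := Real.rpow_pos_of_pos two_pos _
  have h2p2 : (1:ℝ) ≤ (2:ℝ) ^ (p-2) := by
    have := (Real.rpow_le_rpow_left_iff (x := (2:ℝ)) (by norm_num)).mpr
      (show (0:ℝ) ≤ p - 2 by linarith)
    simpa using this
  have hden : (1:ℝ) ≤ 4 * (p-1) * (2:ℝ) ^ (p-2) := by nlinarith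
  have hdenpos : (0:ℝ) < 4 * (p-1) * (2:ℝ) ^ (p-2) := by linarith
  set c3 : ℝ := m / (4 * (p-1) * (2:ℝ) ^ (p-2)) with hc3
  have hc3pos : 0 < c3 := div_pos hm0 hdenpos
  have hc3m : c3 ≤ m := div_le_self hm0.le hden
  have hmle1 : m ≤ 1 := Real.rpow_le_one_of_one_le_of_nonpos (by norm_num) (by linarith)
  have hc3le1 : c3 ≤ 1 := hc3m.trans hmle1
  have hc3id : (p-1) * (2:ℝ) ^ (p-2) * c3 = m / 4 := by
    rw [hc3]; field_simp
  have hc3half : c3 ^ (1/(p-1)) ≤ 1/2 := by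
    have h1 : c3 ^ (1/(p-1)) ≤ m ^ (1/(p-1)) :=
      Real.rpow_le_rpow hc3pos.le hc3m (by rw [one_div, inv_nonneg]; linarith)
    have h2 : m ^ (1/(p-1)) = 1/2 := by
      rw [hm, ← Real.rpow_mul (by norm_num : (0:ℝ) ≤ 2),
        show (1-p) * (1/(p-1)) = -1 by field_simp; ring,
        Real.rpow_neg_one]
      norm_num
    rw [h2] at h1; exact h1
  set κ' : ℝ := min κ 1 with hκ'
  have hκ'0 : 0 < κ' := lt_min hκ one_pos
  have hκ'1 : κ' ≤ 1 := min_le_right _ _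
  have hκ'κ : κ' ≤ κ := min_le_left _ _
  refine ⟨κ' * m / 2, c3, by positivity, hc3pos, hc3le1, ?_⟩
  intro n hn x y hx
  have hs : 0 < ‖x‖ := norm_pos_iff.mpr hx
  have h0t : 0 ≤ ‖x + y‖ := norm_nonneg _
  have h0Y : 0 ≤ ‖y‖ := norm_nonneg _
  have hip1 : (⟪x + y, y⟫ : ℝ) = ‖x + y‖^2 - ⟪x, x + y⟫ := by
    have h1 : (⟪x + y, y⟫ : ℝ) = ⟪x + y, x + y⟫ - ⟪x + y, x⟫ := by
      rw [← inner_sub_right]; congr 1; abel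
    rw [h1, real_inner_self_eq_norm_sq, real_inner_comm]
  have hip2 : (⟪x, y⟫ : ℝ) = ⟪x, x + y⟫ - ‖x‖^2 := by
    have h1 : (⟪x, y⟫ : ℝ) = ⟪x, x + y⟫ - ⟪x, x⟫ := by
      rw [← inner_sub_right]; congr 1; abel
    rw [h1, real_inner_self_eq_norm_sq]
  have hY2 : ‖y‖^2 = ‖x‖^2 + ‖x + y‖^2 - 2*⟪x, x + y⟫ := by
    have h0 : x + y - x = y := by abel
    have h := norm_sub_sq_real (x+y) x
    rw [h0, real_inner_comm] at h
    rw [h]; ring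
  have hc_le : (⟪x, x + y⟫ : ℝ) ≤ ‖x‖ * ‖x + y‖ := real_inner_le_norm x (x + y)
  have hstY : ‖x‖ - ‖x + y‖ ≤ ‖y‖ := by
    have h := norm_sub_norm_le x (x + y)
    have h2 : x - (x + y) = -y := by abel
    rwa [h2, norm_neg] at h
  have hYst : ‖y‖ ≤ ‖x‖ + ‖x + y‖ := by
    have h0 : x + y - x = y := by abel
    have h := norm_sub_le (x + y) x
    rw [h0] at h
    linarith
  have key := scalar_main p κ κ' c3 (κ' * m / 2) hp hκ'0 hκ'1 hκ'κ hc3pos hc3half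
    (by rw [hc3id]) (by nlinarith) (by nlinarith)
    ‖x‖ ‖x + y‖ ‖y‖ ⟪x, x + y⟫ hs h0t h0Y hc_le hY2 hstY hYst
  rw [ge_iff_le, hip1, hip2]
  simp only [w3, w4]
  exact key
end
end

section
/- For every κ > 0 there exists a constant C₁ = C₁(p*, κ) > 0 such that for all real numbers a and b with a ≠ 0: |a+b|^{p*−2}(a+b)·b ≤ |a|^{p*−2}a·b + (p*−1+κ)·((|a| + C₁|b|)^{p*}/(a² + b²))·b². -/
open MeasureTheory Real Filter RealInnerProductSpace

noncomputable section

lemma tangent_rpow {s t r : ℝ} (hs : 0 < s) (ht : 0 ≤ t) (hr0 : 0 ≤ r) (hr1 : r ≤ 1) :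
    t ^ r ≤ s ^ r + r * s ^ (r - 1) * (t - s) := by
  have hx : (-1 : ℝ) ≤ t / s - 1 := by
    have : 0 ≤ t / s := div_nonneg ht hs.le
    linarith
  have hB := _root_.rpow_one_add_le_one_add_mul_self hx hr0 hr1
  have h1 : (1 : ℝ) + (t / s - 1) = t / s := by ring
  rw [h1] at hB
  have ht' : t ^ r = (t / s) ^ r * s ^ r := by
    rw [← Real.mul_rpow (div_nonneg ht hs.le) hs.le, div_mul_cancel₀ _ hs.ne']
  have hsr : s ^ (r - 1) = s ^ r / s := by
    rw [Real.rpow_sub hs, Real.rpow_one]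
  have hsrpos : (0:ℝ) < s ^ r := Real.rpow_pos_of_pos hs r
  rw [ht', hsr]
  calc (t/s)^r * s^r ≤ (1 + r * (t/s - 1)) * s ^ r :=
        mul_le_mul_of_nonneg_right hB hsrpos.le
    _ = s ^ r + r * (s ^ r / s) * (t - s) := by field_simp

lemma cross_aux {q κ δ : ℝ} (hq1 : 1 < q) (hq2 : q ≤ 2) (hκ : 0 < κ)
    (hδ0 : 0 < δ) (hδ1 : δ ≤ 1/2) (hδκ : δ ≤ κ/4) :
    (q-1)*(1+δ^2) ≤ (q-1+κ)*(1-δ) := by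
  nlinarith [mul_nonneg (by linarith : (0:ℝ) ≤ 2-q) (by positivity : (0:ℝ) ≤ δ + δ^2),
    mul_le_mul_of_nonneg_left hδ1 hδ0.le, mul_le_mul_of_nonneg_left hδ1 hκ.le]

set_option maxHeartbeats 1000000 in
lemma core_ineq (q κ : ℝ) (hq1 : 1 < q) (hq2 : q ≤ 2) (hκ : 0 < κ) :
    ∃ C₁ : ℝ, 0 < C₁ ∧ ∀ a b : ℝ, 0 < a →
      |a+b| ^ (q-2) * ((a+b)*b) ≤
        |a| ^ (q-2) * (a*b) + (q-1+κ) * ((|a| + C₁*|b|)^q/(a^2+b^2)) * b^2 := by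
  obtain ⟨δ, hδ0, hδ1, hδκ⟩ : ∃ δ : ℝ, 0 < δ ∧ δ ≤ 1/2 ∧ δ ≤ κ/4 :=
    ⟨min (1/2) (κ/4), lt_min (by norm_num) (by linarith), min_le_left _ _, min_le_right _ _⟩
  obtain ⟨C₁, hC1, hCM⟩ : ∃ C₁ : ℝ, 1 ≤ C₁ ∧ 2*(1+1/δ)*(1+1/δ^2)/(q-1+κ) ≤ C₁ :=
    ⟨max 1 (2*(1+1/δ)*(1+1/δ^2)/(q-1+κ)), le_max_left _ _, le_max_right _ _⟩
  have hC₁pos : 0 < C₁ := lt_of_lt_of_le one_pos hC1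
  have hqκpos : 0 < q - 1 + κ := by linarith
  refine ⟨C₁, hC₁pos, ?_⟩
  intro a b ha
  have habs : |a| = a := abs_of_pos ha
  rw [habs]
  have hbabs : 0 ≤ |b| := abs_nonneg b
  have hS : 0 < a^2 + b^2 := by positivity
  have hP : 0 ≤ (a + C₁*|b|)^q := Real.rpow_nonneg (by positivity) q
  have hform : (q-1+κ) * ((a + C₁*|b|)^q/(a^2+b^2)) * b^2
      = (q-1+κ) * (a + C₁*|b|)^q * b^2 / (a^2+b^2) := by ring
  rw [hform]
  have haq1 : a ^ (q-2) * a = a ^ (q-1) := by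
    rw [← Real.rpow_add_one ha.ne' (q-2)]; congr 1; ring
  have hA : a ^ (q-2) * (a*b) = a^(q-1) * b := by
    rw [← mul_assoc, haq1]
  rw [hA]
  -- main key inequality with cleared denominator
  suffices key : (|a+b| ^ (q-2) * ((a+b)*b) - a^(q-1)*b) * (a^2+b^2)
      ≤ (q-1+κ) * (a + C₁*|b|)^q * b^2 by
    have h2 : |a+b| ^ (q-2) * ((a+b)*b) - a^(q-1)*b
        ≤ (q-1+κ) * (a + C₁*|b|)^q * b^2 / (a^2+b^2) := (le_div_iff₀ hS).mpr key
    linarith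
  rcases le_or_gt |b| (δ*a) with hb | hb
  · -- Regime 1: |b| ≤ δ a
    have hnb : -(δ*a) ≤ b := by
      have := neg_abs_le b; linarith
    have hab0 : 0 < a + b := by nlinarith
    have h1δ : 0 < 1 - δ := by linarith
    have h1δa : 0 < (1-δ)*a := by positivity
    have habge : (1-δ)*a ≤ a + b := by nlinarith
    have habsab : |a+b| = a + b := abs_of_pos hab0
    rw [habsab]
    have habq : (a+b) ^ (q-2) * ((a+b)*b) = (a+b)^(q-1) * b := by
      rw [← mul_assoc, ← Real.rpow_add_one hab0.ne' (q-2)]; congr 1; ring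
    rw [habq]
    -- step 1
    have step1 : (a+b)^(q-1) * b ≤ a^(q-1)*b + (q-1) * ((1-δ)*a)^(q-2) * b^2 := by
      rcases le_or_gt 0 b with hb0 | hb0
      · have ht := tangent_rpow ha (le_of_lt hab0) (by linarith : (0:ℝ) ≤ q-1) (by linarith)
        have he : q - 1 - 1 = q - 2 := by ring
        rw [he] at ht
        have hw : a^(q-2) ≤ ((1-δ)*a)^(q-2) :=
          Real.rpow_le_rpow_of_nonpos h1δa (by nlinarith) (by linarith)
        have h1 : (a+b)^(q-1) ≤ a^(q-1) + (q-1)*a^(q-2)*b := by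
          have : a + b - a = b := by ring
          rw [this] at ht; exact ht
        have hw' : (q-1)*a^(q-2) ≤ (q-1)*((1-δ)*a)^(q-2) :=
          mul_le_mul_of_nonneg_left hw (by linarith : (0:ℝ) ≤ q-1)
        calc (a+b)^(q-1) * b ≤ (a^(q-1) + (q-1)*a^(q-2)*b)*b :=
              mul_le_mul_of_nonneg_right h1 hb0
          _ = a^(q-1)*b + ((q-1)*a^(q-2))*b^2 := by ring
          _ ≤ a^(q-1)*b + ((q-1)*((1-δ)*a)^(q-2))*b^2 := by
              have := mul_le_mul_of_nonneg_right hw' (sq_nonneg b)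
              linarith
      · have ht := tangent_rpow hab0 ha.le (by linarith : (0:ℝ) ≤ q-1) (by linarith)
        have he : q - 1 - 1 = q - 2 := by ring
        rw [he] at ht
        have h1 : a^(q-1) + (q-1)*(a+b)^(q-2)*b ≤ (a+b)^(q-1) := by
          have : a - (a+b) = -b := by ring
          rw [this] at ht; linarith [ht]
        have hw : (a+b)^(q-2) ≤ ((1-δ)*a)^(q-2) :=
          Real.rpow_le_rpow_of_nonpos h1δa habge (by linarith)
        have hw' : (q-1)*(a+b)^(q-2) ≤ (q-1)*((1-δ)*a)^(q-2) :=
          mul_le_mul_of_nonneg_left hw (by linarith : (0:ℝ) ≤ q-1)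
        calc (a+b)^(q-1) * b ≤ (a^(q-1) + (q-1)*(a+b)^(q-2)*b)*b :=
              mul_le_mul_of_nonpos_right h1 hb0.le
          _ = a^(q-1)*b + ((q-1)*(a+b)^(q-2))*b^2 := by ring
          _ ≤ a^(q-1)*b + ((q-1)*((1-δ)*a)^(q-2))*b^2 := by
              have := mul_le_mul_of_nonneg_right hw' (sq_nonneg b)
              linarith
    -- step 2 : (q-1)*((1-δ)a)^(q-2)*(a²+b²) ≤ (q-1+κ)*(a+C₁|b|)^q
    have core2 : (q-1)*((1-δ)*a)^(q-2)*(a^2+b^2) ≤ (q-1+κ)*(a + C₁*|b|)^q := by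
      have e1 : ((1-δ)*a)^(q-2) = (1-δ)^(q-2) * a^(q-2) :=
        Real.mul_rpow h1δ.le ha.le
      have e2 : (1-δ)^(q-2) ≤ (1-δ)⁻¹ := by
        have := Real.rpow_le_rpow_of_exponent_ge h1δ (by linarith) (by linarith : (-1:ℝ) ≤ q-2)
        rwa [Real.rpow_neg_one] at this
      have e4 : a^2 + b^2 ≤ (1+δ^2)*a^2 := by
        have hb2 : b^2 ≤ δ^2*a^2 := by
          have h := pow_le_pow_left₀ (abs_nonneg b) hb 2
          rwa [sq_abs, mul_pow] at h
        have : (1+δ^2)*a^2 = a^2 + δ^2*a^2 := by ring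
        linarith
      have e5 : a^(q-2) * a^2 = a^q := by
        rw [← Real.rpow_two, ← Real.rpow_add ha]; congr 1; ring
      have e3 : a^q ≤ (a + C₁*|b|)^q :=
        Real.rpow_le_rpow ha.le
          (by linarith [mul_nonneg hC₁pos.le (abs_nonneg b)]) (by linarith)
      have hcross : (q-1)*(1+δ^2) ≤ (q-1+κ)*(1-δ) := cross_aux hq1 hq2 hκ hδ0 hδ1 hδκ
      have hw : 0 < a^(q-2) := Real.rpow_pos_of_pos ha _
      have hq1' : (0:ℝ) ≤ q - 1 := by linarith
      calc (q-1)*((1-δ)*a)^(q-2)*(a^2+b^2)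
          = (q-1)*((1-δ)^(q-2) * a^(q-2))*(a^2+b^2) := by rw [e1]
        _ ≤ (q-1)*((1-δ)⁻¹ * a^(q-2))*((1+δ^2)*a^2) := by
            apply mul_le_mul
            · exact mul_le_mul_of_nonneg_left
                (mul_le_mul_of_nonneg_right e2 hw.le) hq1'
            · exact e4
            · positivity
            · positivity
        _ = ((q-1)*(1+δ^2)/(1-δ)) * (a^(q-2)*a^2) := by ring
        _ ≤ (q-1+κ) * (a^(q-2)*a^2) := by
            apply mul_le_mul_of_nonneg_right _ (by positivity)
            rw [div_le_iff₀ h1δ]; exact hcross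
        _ = (q-1+κ) * a^q := by rw [e5]
        _ ≤ (q-1+κ)*(a + C₁*|b|)^q := mul_le_mul_of_nonneg_left e3 (by linarith)
    calc ((a+b)^(q-1) * b - a^(q-1)*b) * (a^2+b^2)
        ≤ ((q-1) * ((1-δ)*a)^(q-2) * b^2) * (a^2+b^2) := by
          apply mul_le_mul_of_nonneg_right _ hS.le; linarith
      _ = (q-1)*((1-δ)*a)^(q-2)*(a^2+b^2) * b^2 := by ring
      _ ≤ (q-1+κ)*(a + C₁*|b|)^q * b^2 :=
          mul_le_mul_of_nonneg_right core2 (sq_nonneg b)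
  · -- Regime 2: δ a < |b|
    have hbpos : 0 < |b| := lt_trans (by positivity) hb
    have hbne : b ≠ 0 := abs_pos.mp hbpos
    -- s1 : LHS ≤ (a+|b|)^(q-1) * |b|
    have hq10 : (0:ℝ) < q - 1 := by linarith
    have s1 : |a+b| ^ (q-2) * ((a+b)*b) ≤ (a+|b|)^(q-1) * |b| := by
      have h1 : |a+b| ^ (q-2) * ((a+b)*b) ≤ |a+b|^(q-1) * |b| := by
        rcases eq_or_ne (a+b) 0 with h0 | h0
        · rw [h0]
          simp only [abs_zero, zero_mul, mul_zero]
          rw [Real.zero_rpow (by linarith : q - 1 ≠ 0)]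
          simp
        · have := mul_le_mul_of_nonneg_left
            ((le_abs_self ((a+b)*b)).trans_eq (abs_mul _ _))
            (Real.rpow_nonneg (abs_nonneg (a+b)) (q-2))
          calc |a+b| ^ (q-2) * ((a+b)*b) ≤ |a+b| ^ (q-2) * (|a+b| * |b|) := this
            _ = |a+b|^(q-1) * |b| := by
                rw [← mul_assoc, ← Real.rpow_add_one (abs_ne_zero.mpr h0) (q-2)]
                congr 1; ring
      have h2 : |a+b|^(q-1) ≤ (a+|b|)^(q-1) :=
        Real.rpow_le_rpow (abs_nonneg _) ((abs_add_le a b).trans (by rw [habs])) (by linarith)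
      exact h1.trans (mul_le_mul_of_nonneg_right h2 hbpos.le)
    have s2 : -(a^(q-1)*b) ≤ (a+|b|)^(q-1) * |b| := by
      have h2 : a^(q-1) ≤ (a+|b|)^(q-1) :=
        Real.rpow_le_rpow ha.le (by linarith) (by linarith)
      have h3 : -(a^(q-1)*b) ≤ a^(q-1)*|b| := by
        have hnn : 0 ≤ a^(q-1) := Real.rpow_nonneg ha.le _
        have h4 := mul_le_mul_of_nonneg_left (neg_le_abs b : -b ≤ |b|) hnn
        linarith [h4, (by ring : a^(q-1) * -b = -(a^(q-1)*b))]
      exact h3.trans (mul_le_mul_of_nonneg_right h2 hbpos.le)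
    -- s3
    have hδinv : (1:ℝ) ≤ 1/δ + 1 := by
      have : 0 < 1/δ := by positivity
      linarith
    have s3 : (a+|b|)^(q-1) ≤ (1/δ+1) * |b|^(q-1) := by
      have t1 : a + |b| ≤ (1/δ+1)*|b| := by
        have h3 : a ≤ |b|/δ := by
          rw [le_div_iff₀ hδ0]; nlinarith
        have h4 : |b|/δ = 1/δ * |b| := by ring
        have h5 : (1/δ+1)*|b| = 1/δ*|b| + |b| := by ring
        linarith
      calc (a+|b|)^(q-1) ≤ ((1/δ+1)*|b|)^(q-1) :=
            Real.rpow_le_rpow (by positivity) t1 (by linarith)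
        _ = (1/δ+1)^(q-1) * |b|^(q-1) := Real.mul_rpow (by positivity) hbabs
        _ ≤ (1/δ+1) * |b|^(q-1) := by
            apply mul_le_mul_of_nonneg_right _ (Real.rpow_nonneg hbabs _)
            calc (1/δ+1)^(q-1) ≤ (1/δ+1)^(1:ℝ) :=
                  Real.rpow_le_rpow_of_exponent_le hδinv (by linarith)
              _ = 1/δ + 1 := Real.rpow_one _
    have s4 : |b|^(q-1) * |b| = |b|^q := by
      rw [← Real.rpow_add_one (abs_ne_zero.mpr hbne) (q-1)]; congr 1; ring
    have s5 : a^2 + b^2 ≤ (1/δ^2+1)*b^2 := by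
      have h3 : a ≤ |b|/δ := by
        rw [le_div_iff₀ hδ0]; nlinarith
      have h5 : a^2 ≤ (|b|/δ)^2 := pow_le_pow_left₀ ha.le h3 2
      have h6 : (|b|/δ)^2 = 1/δ^2 * b^2 := by rw [div_pow, sq_abs]; ring
      have h7 : (1/δ^2+1)*b^2 = 1/δ^2*b^2 + b^2 := by ring
      linarith
    have s6 : C₁ * |b|^q ≤ (a + C₁*|b|)^q := by
      have h1 : C₁ * |b|^q ≤ C₁^q * |b|^q := by
        apply mul_le_mul_of_nonneg_right _ (Real.rpow_nonneg hbabs _)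
        calc C₁ = C₁^(1:ℝ) := (Real.rpow_one _).symm
          _ ≤ C₁^q := Real.rpow_le_rpow_of_exponent_le hC1 (by linarith)
      have h2 : C₁^q * |b|^q = (C₁*|b|)^q := (Real.mul_rpow hC₁pos.le hbabs).symm
      have h3 : (C₁*|b|)^q ≤ (a + C₁*|b|)^q :=
        Real.rpow_le_rpow (by positivity) (by linarith) (by linarith)
      linarith [h1.trans_eq h2]
    have s7 : 2*(1+1/δ)*(1+1/δ^2) ≤ (q-1+κ)*C₁ := by
      rw [div_le_iff₀ hqκpos] at hCM; linarith
    have hbq : 0 ≤ |b|^q := Real.rpow_nonneg hbabs _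
    have hBB : 0 ≤ (a+|b|)^(q-1) := Real.rpow_nonneg (by positivity) _
    calc (|a+b| ^ (q-2) * ((a+b)*b) - a^(q-1)*b) * (a^2+b^2)
        ≤ (2 * ((a+|b|)^(q-1) * |b|)) * ((1/δ^2+1)*b^2) := by
          apply mul_le_mul (by linarith) s5 hS.le
          positivity
      _ ≤ (2 * ((1/δ+1) * |b|^(q-1) * |b|)) * ((1/δ^2+1)*b^2) := by
          apply mul_le_mul_of_nonneg_right _ (by positivity)
          have h8 := mul_le_mul_of_nonneg_right s3 (abs_nonneg b)
          linarith
      _ = 2*(1+1/δ)*(1+1/δ^2) * (|b|^(q-1)*|b|) * b^2 := by ring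
      _ = 2*(1+1/δ)*(1+1/δ^2) * |b|^q * b^2 := by rw [s4]
      _ ≤ (q-1+κ)*C₁ * |b|^q * b^2 := by
          apply mul_le_mul_of_nonneg_right _ (sq_nonneg b)
          exact mul_le_mul_of_nonneg_right s7 hbq
      _ = (q-1+κ) * (C₁ * |b|^q) * b^2 := by ring
      _ ≤ (q-1+κ) * (a + C₁*|b|)^q * b^2 := by
          apply mul_le_mul_of_nonneg_right _ (sq_nonneg b)
          exact mul_le_mul_of_nonneg_left s6 hqκpos.le

/-- Scalar inequality for `1 < p ≤ 2n/(n+2)` (so `1 < p* ≤ 2`). -/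
theorem stmt6 (n : ℕ) (hn : 3 ≤ n) (p : ℝ) (hp1 : 1 < p)
    (hp2 : p ≤ 2 * (n : ℝ) / ((n : ℝ) + 2)) (κ : ℝ) (hκ : 0 < κ) :
    ∃ C₁ : ℝ, 0 < C₁ ∧
      ∀ a b : ℝ, a ≠ 0 →
        |a + b| ^ (pstar n p - 2) * ((a + b) * b) ≤
          |a| ^ (pstar n p - 2) * (a * b)
            + (pstar n p - 1 + κ) * ((|a| + C₁ * |b|) ^ pstar n p / (a ^ 2 + b ^ 2)) * b ^ 2 := by
  have hn3 : (3:ℝ) ≤ (n:ℝ) := by exact_mod_cast hn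
  have hn2 : (0:ℝ) < (n:ℝ) + 2 := by linarith
  have hp2' : p * ((n:ℝ)+2) ≤ 2*(n:ℝ) := by
    have := (le_div_iff₀ hn2).mp hp2
    linarith
  have hplt2 : p < 2 := by nlinarith
  have hnp : 0 < (n:ℝ) - p := by linarith
  have hq1 : 1 < pstar n p := by
    rw [pstar, lt_div_iff₀ hnp]; nlinarith
  have hq2 : pstar n p ≤ 2 := by
    rw [pstar, div_le_iff₀ hnp]; nlinarith
  obtain ⟨C₁, hC₁, h⟩ := core_ineq (pstar n p) κ hq1 hq2 hκ
  refine ⟨C₁, hC₁, ?_⟩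
  intro a b ha
  rcases ha.lt_or_gt with hneg | hpos
  · have h2 := h (-a) (-b) (by linarith)
    have e1 : -a + -b = -(a+b) := by ring
    rw [e1, abs_neg, abs_neg, abs_neg] at h2
    have e2 : -(a+b) * -b = (a+b)*b := by ring
    have e3 : -a * -b = a*b := by ring
    have e4 : (-a)^2 + (-b)^2 = a^2+b^2 := by ring
    have e5 : (-b)^2 = b^2 := by ring
    rw [e2, e3, e4, e5] at h2
    exact h2
  · exact h a b hpos
end
end

section
/- For every κ > 0 there exists a constant C₂ = C₂(p*, κ) > 0 such that for all real numbers a and b with a ≠ 0: |a+b|^{p*−2}(a+b)·b ≤ |a|^{p*−2}a·b + (p*−1+κ)·|a|^{p*−2}·b² + C₂·|b|^{p*}. -/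
open MeasureTheory Real Filter RealInnerProductSpace

noncomputable section

section ScalarHelpers


private lemma tangent_ub {s t : ℝ} (hs : 1 ≤ s) (ht : 0 ≤ t) :
    (1 + t) ^ s ≤ 1 + s * t * (1 + t) ^ (s - 1) := by
  rcases eq_or_lt_of_le ht with rfl | ht
  · simp
  have h1 : (0:ℝ) < 1 + t := by linarith
  have hu : (-1:ℝ) ≤ -t / (1 + t) := by
    rw [neg_div, neg_le_neg_iff, div_le_one h1]; linarith
  have hb := one_add_mul_self_le_rpow_one_add hu hs
  have h2 : 1 + -t/(1+t) = (1+t)⁻¹ := by field_simp; ring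
  rw [h2, Real.inv_rpow h1.le] at hb
  have hpos : 0 < (1+t)^s := Real.rpow_pos_of_pos h1 s
  have h3 := mul_le_mul_of_nonneg_left hb hpos.le
  rw [mul_inv_cancel₀ hpos.ne'] at h3
  have key : (1+t)^s * (t/(1+t)) = t * (1+t)^(s-1) := by
    rw [Real.rpow_sub h1, Real.rpow_one]; field_simp
  have expand : (1+t)^s * (1 + s * (-t/(1+t))) = (1+t)^s - s * t * (1+t)^(s-1) := by
    have h5 : (1+t)^s * (1 + s * (-t/(1+t))) = (1+t)^s - s * ((1+t)^s * (t/(1+t))) := by ring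
    rw [h5, key]; ring
  rw [expand] at h3
  linarith

private lemma mid_ub {q t : ℝ} (hq : 2 < q) (ht0 : 0 ≤ t) (ht1 : t ≤ 1) :
    (1 + t) ^ (q - 2) ≤ 1 + ((q-1) * (2:ℝ)^(q-2)) * t := by
  have h2q : (1:ℝ) ≤ (2:ℝ)^(q-2) := by
    calc (1:ℝ) = (2:ℝ)^(0:ℝ) := by norm_num
      _ ≤ (2:ℝ)^(q-2) := Real.rpow_le_rpow_of_exponent_le (by norm_num) (by linarith)
  have hB1 : (1:ℝ) ≤ (q-1) * (2:ℝ)^(q-2) := by nlinarith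
  rcases le_or_gt (q-2) 1 with h | h
  · have hc := mul_le_mul_of_nonneg_right hB1 ht0
    calc (1+t)^(q-2) ≤ (1+t)^(1:ℝ) :=
          Real.rpow_le_rpow_of_exponent_le (by linarith) h
      _ = 1 + t := Real.rpow_one _
      _ ≤ 1 + ((q-1) * (2:ℝ)^(q-2)) * t := by linarith
  · have h1 := tangent_ub (s := q-2) h.le ht0
    have hbd : (1+t)^(q-2-1) ≤ (2:ℝ)^(q-2-1) :=
      Real.rpow_le_rpow (by linarith) (by linarith) (by linarith)
    have hbd2 : (2:ℝ)^(q-2-1) ≤ (2:ℝ)^(q-2) :=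
      Real.rpow_le_rpow_of_exponent_le (by norm_num) (by linarith)
    have hA : (1+t)^(q-2-1) ≤ (2:ℝ)^(q-2) := hbd.trans hbd2
    have h4 : (q-2)*t*((1+t)^(q-2-1)) ≤ (q-2)*t*((2:ℝ)^(q-2)) :=
      mul_le_mul_of_nonneg_left hA (by nlinarith)
    nlinarith

private lemma small_ub {q t κ : ℝ} (hq : 2 < q) (ht0 : 0 ≤ t) (ht1 : t ≤ 1)
    (htδ : ((q-1)*((q-1) * (2:ℝ)^(q-2))) * t ≤ κ) :
    (1+t)^(q-1) ≤ 1 + (q-1+κ)*t := by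
  have h1 := tangent_ub (s := q-1) (by linarith) ht0
  have he : q - 1 - 1 = q - 2 := by ring
  rw [he] at h1
  have h2 := mid_ub hq ht0 ht1
  have h3 : (q-1)*t*((1+t)^(q-2)) ≤ (q-1)*t*(1 + ((q-1) * (2:ℝ)^(q-2)) * t) :=
    mul_le_mul_of_nonneg_left h2 (by nlinarith)
  nlinarith

private lemma scalar_ineq {q κ : ℝ} (hq : 2 < q) (hκ : 0 < κ) :
    ∃ C : ℝ, 0 < C ∧ ∀ t : ℝ,
      |1+t| ^ (q-2) * ((1+t)*t) ≤ t + (q-1+κ)*t^2 + C * |t| ^ q := by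
  set M := (q-1)*((q-1) * (2:ℝ)^(q-2)) with hM
  have h2pos : (0:ℝ) < (2:ℝ)^(q-2) := Real.rpow_pos_of_pos (by norm_num) _
  have hMpos : 0 < M := mul_pos (by linarith) (mul_pos (by linarith) h2pos)
  set δ := min 1 (κ/M) with hδ
  have hδpos : 0 < δ := lt_min one_pos (div_pos hκ hMpos)
  have hδ1 : δ ≤ 1 := min_le_left _ _
  set K := (1+δ)/δ with hK
  have hKpos : 0 < K := div_pos (by linarith) hδpos
  have hK1 : 1 ≤ K := by rw [hK, le_div_iff₀ hδpos]; linarith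
  refine ⟨2*K^(q-1), by positivity, ?_⟩
  intro t
  have hCt : 0 ≤ 2*K^(q-1) * |t| ^ q := by positivity
  rcases le_or_gt |t| δ with hsm | hlg
  · -- small case
    have ht1 : |t| ≤ 1 := hsm.trans hδ1
    have habs := abs_le.mp ht1
    have h1t : 0 ≤ 1 + t := by linarith [habs.1]
    rw [abs_of_nonneg h1t]
    rcases le_or_gt 0 t with htp | htn
    · -- 0 ≤ t
      have hMt : M * t ≤ κ := by
        have h5 : t ≤ κ/M := le_trans ((le_abs_self t).trans hsm) (min_le_right 1 (κ/M))
        calc M * t ≤ M * (κ/M) := mul_le_mul_of_nonneg_left h5 hMpos.le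
          _ = κ := by field_simp
      have hs := small_ub hq htp (by linarith [habs.2]) hMt
      have h1tp : (0:ℝ) < 1 + t := by linarith
      have hrw : (1+t)^(q-2)*(1+t) = (1+t)^(q-1) := by
        rw [show q-1 = (q-2)+1 by ring, Real.rpow_add h1tp, Real.rpow_one]
      calc (1+t)^(q-2)*((1+t)*t) = ((1+t)^(q-2)*(1+t))*t := by ring
        _ = (1+t)^(q-1)*t := by rw [hrw]
        _ ≤ (1 + (q-1+κ)*t)*t := mul_le_mul_of_nonneg_right hs htp
        _ = t + (q-1+κ)*t^2 := by ring
        _ ≤ t + (q-1+κ)*t^2 + 2*K^(q-1) * |t| ^ q := by linarith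
    · -- t < 0
      rcases eq_or_lt_of_le h1t with h0 | h1tp
      · -- 1 + t = 0
        rw [← h0]
        have hz : (0:ℝ)^(q-2) = 0 := Real.zero_rpow (by linarith : q - 2 ≠ 0)
        rw [hz]
        have ht1' : t = -1 := by linarith
        have hq2 : |t| ^ q = 1 := by rw [ht1']; norm_num
        rw [hq2]
        nlinarith [sq_nonneg t, Real.rpow_pos_of_pos hKpos (q-1)]
      · have hb := one_add_mul_self_le_rpow_one_add (s := t)
          (by linarith [habs.1] : (-1:ℝ) ≤ t) (by linarith : (1:ℝ) ≤ q-1)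
        have hrw : (1+t)^(q-2)*(1+t) = (1+t)^(q-1) := by
          rw [show q-1 = (q-2)+1 by ring, Real.rpow_add h1tp, Real.rpow_one]
        calc (1+t)^(q-2)*((1+t)*t) = ((1+t)^(q-2)*(1+t))*t := by ring
          _ = (1+t)^(q-1)*t := by rw [hrw]
          _ ≤ (1 + (q-1)*t)*t := by nlinarith
          _ ≤ t + (q-1+κ)*t^2 := by nlinarith
          _ ≤ t + (q-1+κ)*t^2 + 2*K^(q-1) * |t| ^ q := by linarith
  · -- large case
    have htpos : 0 < |t| := hδpos.trans hlg
    have h1 : |1+t| ≤ K * |t| := by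
      have ha : |1+t| ≤ 1 + |t| := by
        calc |1+t| ≤ |(1:ℝ)| + |t| := abs_add_le 1 t
          _ = 1 + |t| := by norm_num
      have h2 : 1 ≤ |t| / δ := (one_le_div hδpos).mpr hlg.le
      have h3 : K * |t| = |t| / δ + |t| := by rw [hK]; field_simp
      linarith
    have hLa : (1+t)*t ≤ |1+t| * |t| := by
      calc (1+t)*t ≤ |(1+t)*t| := le_abs_self _
        _ = |1+t| * |t| := abs_mul _ _
    have hL : |1+t| ^ (q-2) * ((1+t)*t) ≤ |1+t| ^ (q-2) * (|1+t| * |t|) :=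
      mul_le_mul_of_nonneg_left hLa (Real.rpow_nonneg (abs_nonneg _) _)
    have h2 : |1+t| ^ (q-2) ≤ (K * |t|) ^ (q-2) :=
      Real.rpow_le_rpow (abs_nonneg _) h1 (by linarith)
    have h3 : |1+t| ^ (q-2) * (|1+t| * |t|) ≤ (K * |t|) ^ (q-2) * ((K * |t|) * |t|) :=
      mul_le_mul h2 (mul_le_mul_of_nonneg_right h1 (abs_nonneg t))
        (mul_nonneg (abs_nonneg _) (abs_nonneg _)) (Real.rpow_nonneg (by positivity) _)
    have hKt : 0 < K * |t| := mul_pos hKpos htpos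
    have h4 : (K * |t|) ^ (q-2) * ((K * |t|) * |t|) = K^(q-1) * |t| ^ q := by
      have e1 : (K * |t|) ^ (q-2) * ((K * |t|) * |t|) = ((K * |t|) ^ (q-2) * (K * |t|)) * |t| := by
        ring
      have e2 : (K * |t|) ^ (q-2) * (K * |t|) = (K * |t|) ^ ((q-2)+1) := by
        rw [Real.rpow_add hKt, Real.rpow_one]
      have e3 : (q-2)+(1:ℝ) = q-1 := by ring
      have e4 : (K * |t|) ^ (q-1) = K^(q-1) * |t| ^ (q-1) := Real.mul_rpow hKpos.le (abs_nonneg t)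
      have e5 : |t| ^ (q-1) * |t| = |t| ^ ((q-1)+1) := by
        rw [Real.rpow_add htpos, Real.rpow_one]
      have e6 : (q-1)+(1:ℝ) = q := by ring
      rw [e1, e2, e3, e4]
      rw [mul_assoc, e5, e6]
    have h5 : δ^(q-1) ≤ |t| ^ (q-1) := Real.rpow_le_rpow hδpos.le hlg.le (by linarith)
    have h6 : |t| ^ q = |t| ^ (q-1) * |t| := by
      conv_lhs => rw [show q = (q-1)+1 by ring]
      rw [Real.rpow_add htpos, Real.rpow_one]
    have h7 : K^(q-1) * δ^(q-1) = (1+δ)^(q-1) := by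
      rw [← Real.mul_rpow hKpos.le hδpos.le, hK, div_mul_cancel₀]
      exact hδpos.ne'
    have h8 : (1:ℝ) ≤ (1+δ)^(q-1) := by
      calc (1:ℝ) = (1+δ)^(0:ℝ) := by rw [Real.rpow_zero]
        _ ≤ (1+δ)^(q-1) := Real.rpow_le_rpow_of_exponent_le (by linarith) (by linarith)
    have hKq : 0 < K^(q-1) := Real.rpow_pos_of_pos hKpos _
    have h9 : |t| ≤ K^(q-1) * |t| ^ q := by
      rw [h6]
      calc |t| = 1 * |t| := (one_mul _).symm
        _ ≤ (K^(q-1) * |t| ^ (q-1)) * |t| := by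
            apply mul_le_mul_of_nonneg_right _ (abs_nonneg t)
            calc (1:ℝ) ≤ (1+δ)^(q-1) := h8
              _ = K^(q-1) * δ^(q-1) := h7.symm
              _ ≤ K^(q-1) * |t| ^ (q-1) := mul_le_mul_of_nonneg_left h5 hKq.le
        _ = K^(q-1) * (|t| ^ (q-1) * |t|) := by ring
    have h10 : -t ≤ |t| := neg_le_abs t
    nlinarith [sq_nonneg t, hL.trans (h3.trans_eq h4)]

end ScalarHelpers

/-- Scalar inequality for `2n/(n+2) < p < n` (so `p* > 2`). -/
theorem stmt7 (n : ℕ) (hn : 2 ≤ n) (p : ℝ) (hp1 : 2 * (n : ℝ) / ((n : ℝ) + 2) < p)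
    (hp2 : p < n) (κ : ℝ) (hκ : 0 < κ) :
    ∃ C₂ : ℝ, 0 < C₂ ∧
      ∀ a b : ℝ, a ≠ 0 →
        |a + b| ^ (pstar n p - 2) * ((a + b) * b) ≤
          |a| ^ (pstar n p - 2) * (a * b)
            + (pstar n p - 1 + κ) * |a| ^ (pstar n p - 2) * b ^ 2
            + C₂ * |b| ^ pstar n p := by
  have hn2 : (2:ℝ) ≤ (n:ℝ) := by exact_mod_cast hn
  have hnpos : (0:ℝ) < (n:ℝ) := by linarith
  have hp0 : 0 < p := by
    have h0 : (0:ℝ) < 2*(n:ℝ)/((n:ℝ)+2) := by positivity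
    linarith
  have hnp : 0 < (n:ℝ) - p := by linarith
  have hq : 2 < pstar n p := by
    rw [pstar, lt_div_iff₀ hnp]
    have h2 : (0:ℝ) < (n:ℝ)+2 := by linarith
    rw [div_lt_iff₀ h2] at hp1
    nlinarith
  obtain ⟨C, hCpos, hC⟩ := scalar_ineq hq hκ
  refine ⟨C, hCpos, ?_⟩
  intro a b ha0
  have ha : 0 < |a| := abs_pos.mpr ha0
  set t := b / a with ht
  have hb : b = a * t := by rw [ht]; field_simp
  have hab : a + b = a * (1 + t) := by rw [hb]; ring
  have hA : |a| ^ (pstar n p - 2) * a ^ 2 = |a| ^ pstar n p := by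
    rw [← sq_abs, ← Real.rpow_natCast |a| 2, ← Real.rpow_add ha]
    norm_num
  have hAq : 0 ≤ |a| ^ pstar n p := Real.rpow_nonneg (abs_nonneg a) _
  have key := hC t
  calc |a + b| ^ (pstar n p - 2) * ((a + b) * b)
      = |a| ^ pstar n p * (|1+t| ^ (pstar n p - 2) * ((1+t)*t)) := by
        rw [hab, hb, abs_mul, Real.mul_rpow (abs_nonneg a) (abs_nonneg _), ← hA]; ring
    _ ≤ |a| ^ pstar n p * (t + (pstar n p - 1 + κ)*t^2 + C * |t| ^ pstar n p) :=
        mul_le_mul_of_nonneg_left key hAq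
    _ = |a| ^ (pstar n p - 2) * (a * (a * t))
          + (pstar n p - 1 + κ) * |a| ^ (pstar n p - 2) * (a*t)^2
          + C * (|a| ^ pstar n p * |t| ^ pstar n p) := by rw [← hA]; ring
    _ = |a| ^ (pstar n p - 2) * (a * b)
          + (pstar n p - 1 + κ) * |a| ^ (pstar n p - 2) * b ^ 2
          + C * |b| ^ pstar n p := by
        rw [← Real.mul_rpow (abs_nonneg a) (abs_nonneg t), ← abs_mul, ← hb]
end
end

section
/- Let 1 < p < 2. For all x, y ∈ ℝⁿ with x ≠ 0 and |x| ≤ |x+y|: |x+y|^{p−2}(x+y)·y ≥ |x|^{p−2}x·y + |x+y|^{p−2}|y|² + (p−2)·(|x+y|^{p−1}/((2−p)|x+y| + (p−1)|x|))·(|x| − |x+y|)². -/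
open MeasureTheory Real Filter RealInnerProductSpace

noncomputable section

private lemma key_aux (q t : ℝ) (hq0 : 0 < q) (hq1 : q < 1) (ht0 : 0 < t) (ht1 : t ≤ 1) :
    (t ^ q - t) * ((1 - q) + q * t) ≤ (1 - q) * (1 - t) := by
  have h1 : t ^ q ≤ (1 - q) + q * t := by
    have := Real.geom_mean_le_arith_mean2_weighted (by linarith : (0:ℝ) ≤ 1 - q) hq0.le
      zero_le_one ht0.le (by ring)
    rw [Real.one_rpow, one_mul, mul_one] at this
    linarith
  have hD : (0:ℝ) ≤ (1 - q) + q * t := by nlinarith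
  have h2 : t ^ q * ((1 - q) + q * t) ≤ ((1 - q) + q * t) ^ 2 := by
    nlinarith [mul_le_mul_of_nonneg_right h1 hD]
  nlinarith [sq_nonneg (1 - t), mul_nonneg (mul_nonneg hq0.le (by linarith : (0:ℝ) ≤ 1 - q)) (sq_nonneg (1 - t))]

private lemma scalar_aux (p a b : ℝ) (hp1 : 1 < p) (hp2 : p < 2) (ha : 0 < a) (hab : a ≤ b) :
    (a ^ (p - 2) - b ^ (p - 2)) * (a * (b - a)) * ((2 - p) * b + (p - 1) * a)
      ≤ (2 - p) * b ^ (p - 1) * (b - a) ^ 2 := by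
  have hb : 0 < b := lt_of_lt_of_le ha hab
  set t := a / b with htdef
  have ht0 : 0 < t := div_pos ha hb
  have ht1 : t ≤ 1 := (div_le_one hb).mpr hab
  have hat : a = t * b := (div_mul_cancel₀ a hb.ne').symm
  have hkey := key_aux (p - 1) t (by linarith) (by linarith) ht0 ht1
  have hkey2 := mul_le_mul_of_nonneg_right hkey (by linarith : (0:ℝ) ≤ 1 - t)
  have e1 : a ^ (p - 2) = t ^ (p - 2) * b ^ (p - 2) := by
    rw [hat, Real.mul_rpow ht0.le hb.le]
  have e2 : t ^ (p - 1) = t ^ (p - 2) * t := by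
    rw [show p - 1 = (p - 2) + 1 by ring, Real.rpow_add ht0, Real.rpow_one]
  have e3 : b ^ (p - 1) = b ^ (p - 2) * b := by
    rw [show p - 1 = (p - 2) + 1 by ring, Real.rpow_add hb, Real.rpow_one]
  rw [e2] at hkey2
  have hYb : (0:ℝ) ≤ b ^ (p - 2) * b ^ 3 := by positivity
  have hfin := mul_le_mul_of_nonneg_left hkey2 hYb
  rw [e1, e3, hat]
  nlinarith [hfin]

/-- Pointwise inequality for `1 < p < 2` in the regime `|x| ≤ |x+y|`. -/
theorem stmt14 (p : ℝ) (hp1 : 1 < p) (hp2 : p < 2)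
    (n : ℕ) (hn : 1 ≤ n) (x y : En n) (hx : x ≠ 0) (h : ‖x‖ ≤ ‖x + y‖) :
    ‖x + y‖ ^ (p - 2) * ⟪x + y, y⟫ ≥
      ‖x‖ ^ (p - 2) * ⟪x, y⟫ + ‖x + y‖ ^ (p - 2) * ‖y‖ ^ 2
        + (p - 2) * (‖x + y‖ ^ (p - 1) / ((2 - p) * ‖x + y‖ + (p - 1) * ‖x‖)) *
            (‖x‖ - ‖x + y‖) ^ 2 := by
  have hb0 : (0:ℝ) < ‖x + y‖ := lt_of_lt_of_le (norm_pos_iff.mpr hx) h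
  have ha0 : (0:ℝ) < ‖x‖ := norm_pos_iff.mpr hx
  set a := ‖x‖ with hadef
  set b := ‖x + y‖ with hbdef
  have hD : (0:ℝ) < (2 - p) * b + (p - 1) * a := by nlinarith
  have hiy : ⟪x + y, y⟫ = ⟪x, y⟫ + ‖y‖ ^ 2 := by
    rw [inner_add_left, real_inner_self_eq_norm_sq]
  have hxy : ⟪x, y⟫ ≤ a * (b - a) := by
    have h1 : ⟪x, x + y⟫ = ⟪x, x⟫ + ⟪x, y⟫ := inner_add_right x x y
    have h2 : ⟪x, x + y⟫ ≤ a * b := real_inner_le_norm x (x + y)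
    have h3 : ⟪x, x⟫ = a ^ 2 := real_inner_self_eq_norm_sq x
    nlinarith
  have hmono : b ^ (p - 2) ≤ a ^ (p - 2) :=
    Real.rpow_le_rpow_of_nonpos ha0 h (by linarith)
  have hscal := scalar_aux p a b hp1 hp2 ha0 h
  set C := b ^ (p - 1) / ((2 - p) * b + (p - 1) * a) with hCdef
  have hCD : C * ((2 - p) * b + (p - 1) * a) = b ^ (p - 1) :=
    div_mul_cancel₀ _ (ne_of_gt hD)
  have hscal2 : (a ^ (p - 2) - b ^ (p - 2)) * (a * (b - a)) ≤ (2 - p) * C * (b - a) ^ 2 := by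
    rw [← hCD] at hscal
    have := (mul_le_mul_iff_of_pos_right hD).mp (by nlinarith [hscal] :
      ((a ^ (p - 2) - b ^ (p - 2)) * (a * (b - a))) * ((2 - p) * b + (p - 1) * a)
        ≤ ((2 - p) * C * (b - a) ^ 2) * ((2 - p) * b + (p - 1) * a))
    exact this
  have hprod : (b ^ (p - 2) - a ^ (p - 2)) * (a * (b - a)) ≤ (b ^ (p - 2) - a ^ (p - 2)) * ⟪x, y⟫ := by
    have hneg : b ^ (p - 2) - a ^ (p - 2) ≤ 0 := by linarith
    nlinarith [mul_le_mul_of_nonpos_left hxy hneg]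
  rw [hiy]
  nlinarith [hscal2, hprod]
end
end

section
/- Let p ≥ 2. For all x, y ∈ ℝⁿ with x ≠ 0 and |x| ≤ |x+y|: |x+y|^{p−2}(x+y)·y − |x|^{p−2}(x+y)·y ≥ (p−2)·|x|^{p−2}·(|x| − |x+y|)². -/
open MeasureTheory Real Filter RealInnerProductSpace

noncomputable section

/-- Pointwise inequality for `p ≥ 2` in the regime `|x| ≤ |x+y|`. -/
theorem stmt15 (p : ℝ) (hp : 2 ≤ p)
    (n : ℕ) (hn : 1 ≤ n) (x y : En n) (hx : x ≠ 0) (h : ‖x‖ ≤ ‖x + y‖) :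
    ‖x + y‖ ^ (p - 2) * ⟪x + y, y⟫ - ‖x‖ ^ (p - 2) * ⟪x + y, y⟫ ≥
      (p - 2) * ‖x‖ ^ (p - 2) * (‖x‖ - ‖x + y‖) ^ 2 := by
  set a := ‖x‖ with ha_def
  set b := ‖x + y‖ with hb_def
  have ha : 0 < a := norm_pos_iff.mpr hx
  have hb : 0 < b := lt_of_lt_of_le ha h
  -- monotonicity of rpow
  have hpow : a ^ (p - 2) ≤ b ^ (p - 2) :=
    Real.rpow_le_rpow ha.le h (by linarith)
  have hapow : 0 < a ^ (p - 2) := Real.rpow_pos_of_pos ha _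
  -- inner product bound
  have hinner : b * (b - a) ≤ ⟪x + y, y⟫ := by
    have h1 : ⟪x + y, y⟫ = ⟪x + y, x + y⟫ - ⟪x + y, x⟫ := by
      rw [← inner_sub_right]; congr 1; abel
    have h2 : ⟪x + y, x + y⟫ = b ^ 2 := by
      rw [real_inner_self_eq_norm_sq]
    have h3 : ⟪x + y, x⟫ ≤ b * a := real_inner_le_norm (x + y) x
    nlinarith
  -- key scalar inequality: (b^(p-2) - a^(p-2)) * b ≥ (p-2) * a^(p-2) * (b-a)
  have hkey : (p - 2) * a ^ (p - 2) * (b - a) ≤ (b ^ (p - 2) - a ^ (p - 2)) * b := by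
    have ht : (1 : ℝ) ≤ b / a := (one_le_div ha).mpr h
    have hbern : 1 + (p - 1) * (b / a - 1) ≤ (b / a) ^ (p - 1) :=
      one_add_mul_self_le_rpow_one_add (by linarith) (by linarith) |>.trans_eq
        (by rw [add_sub_cancel])
    have hmul := mul_le_mul_of_nonneg_left hbern (Real.rpow_pos_of_pos ha (p - 1)).le
    have hdiv : a ^ (p - 1) * (b / a) ^ (p - 1) = b ^ (p - 1) := by
      rw [← Real.mul_rpow ha.le (by positivity)]
      rw [mul_div_cancel₀ _ ha.ne']
    rw [hdiv] at hmul
    have e1 : a ^ (p - 1) = a ^ (p - 2) * a := by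
      rw [← Real.rpow_add_one ha.ne']; ring_nf
    have e2 : b ^ (p - 1) = b ^ (p - 2) * b := by
      rw [← Real.rpow_add_one hb.ne']; ring_nf
    rw [e1, e2] at hmul
    have e3 : a ^ (p - 2) * a * (1 + (p - 1) * (b / a - 1)) =
        a ^ (p - 2) * (a + (p - 1) * (b - a)) := by
      field_simp
    rw [e3] at hmul
    nlinarith
  have hnn : 0 ≤ b ^ (p - 2) - a ^ (p - 2) := by linarith
  have step1 : (b ^ (p - 2) - a ^ (p - 2)) * (b * (b - a)) ≤
      (b ^ (p - 2) - a ^ (p - 2)) * ⟪x + y, y⟫ :=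
    mul_le_mul_of_nonneg_left hinner hnn
  have step2 : (p - 2) * a ^ (p - 2) * (b - a) ^ 2 ≤
      (b ^ (p - 2) - a ^ (p - 2)) * (b * (b - a)) := by
    nlinarith [sub_nonneg.mpr h, mul_nonneg (mul_nonneg (by linarith : (0:ℝ) ≤ p - 2) hapow.le) (sub_nonneg.mpr h)]
  have : (a - b) ^ 2 = (b - a) ^ 2 := by ring
  nlinarith
end
end

section
/- Let p ≥ 2. There exists a constant c₃ = c₃(p) with 0 < c₃ ≤ 1/2 such that for all x, y ∈ ℝⁿ with x ≠ 0 and |x+y| ≤ c₃^{1/(p−1)}·|x|: |x+y|^{p−2}(x+y)·y ≥ |x|^{p−2}x·y + c₃·|x|^{p−2}|y|² + (p−2)·(|x+y|/|x|)·|x+y|^{p−2}·(|x| − |x+y|)². -/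
open MeasureTheory Real Filter RealInnerProductSpace

noncomputable section

/-- Pointwise inequality for `p ≥ 2` in the regime `|x+y| ≤ c₃^{1/(p-1)} |x|`. -/
theorem stmt16 (p : ℝ) (hp : 2 ≤ p) :
    ∃ c₃ : ℝ, 0 < c₃ ∧ c₃ ≤ 1 / 2 ∧
      ∀ (n : ℕ), 1 ≤ n → ∀ x y : En n, x ≠ 0 → ‖x + y‖ ≤ c₃ ^ (1 / (p - 1)) * ‖x‖ →
        ‖x + y‖ ^ (p - 2) * ⟪x + y, y⟫ ≥
          ‖x‖ ^ (p - 2) * ⟪x, y⟫ + c₃ * ‖x‖ ^ (p - 2) * ‖y‖ ^ 2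
            + (p - 2) * (‖x + y‖ / ‖x‖) * ‖x + y‖ ^ (p - 2) * (‖x‖ - ‖x + y‖) ^ 2 := by
  have hp1 : (1:ℝ) ≤ p - 1 := by linarith
  have hp2 : (0:ℝ) ≤ p - 2 := by linarith
  set t : ℝ := 1 / (4 * (p + 2)) with ht_def
  have ht0 : 0 < t := by
    have : (0:ℝ) < 4 * (p + 2) := by linarith
    positivity
  have ht16 : t ≤ 1 / 16 := by
    rw [ht_def, div_le_div_iff₀ (by linarith) (by norm_num)]
    linarith
  set c₃ : ℝ := t ^ (p - 1) with hc3_def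
  have hc3pos : 0 < c₃ := Real.rpow_pos_of_pos ht0 _
  have hc3t : c₃ ≤ t := by
    have h1 : t ^ (p - 1) ≤ t ^ (1:ℝ) :=
      Real.rpow_le_rpow_of_exponent_ge ht0 (by linarith) hp1
    rwa [Real.rpow_one] at h1
  have hc3half : c₃ ≤ 1 / 2 := by linarith
  have hroot : c₃ ^ (1 / (p - 1)) = t := by
    rw [hc3_def, ← Real.rpow_mul ht0.le, mul_one_div_cancel (by linarith : p - 1 ≠ 0),
      Real.rpow_one]
  refine ⟨c₃, hc3pos, hc3half, ?_⟩
  intro n hn x y hx hxy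
  rw [hroot] at hxy
  set a : ℝ := ‖x‖ with ha_def
  set b : ℝ := ‖x + y‖ with hb_def
  have ha : 0 < a := norm_pos_iff.mpr hx
  have hb : 0 ≤ b := norm_nonneg _
  have hba : b ≤ t * a := hxy
  have hbalt : b ≤ a := by
    have h1 : t * a ≤ 1 * a := mul_le_mul_of_nonneg_right (by linarith) ha.le
    linarith
  set A : ℝ := a ^ (p - 2) with hA_def
  set B : ℝ := b ^ (p - 2) with hB_def
  have hA : 0 < A := Real.rpow_pos_of_pos ha _
  have hB : 0 ≤ B := Real.rpow_nonneg hb _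
  have hAa : a ^ (p - 1) = A * a := by
    rw [show p - 1 = (p - 2) + 1 by ring, Real.rpow_add_one (ne_of_gt ha)]
  have key1 : B * b ≤ c₃ * (A * a) := by
    rcases eq_or_lt_of_le hb with h0 | hbpos
    · rw [← h0]
      have : B * (0:ℝ) = 0 := by ring
      rw [this]
      positivity
    · have hBb : B * b = b ^ (p - 1) := by
        rw [show p - 1 = (p - 2) + 1 by ring, Real.rpow_add_one (ne_of_gt hbpos)]
      rw [hBb]
      calc b ^ (p - 1) ≤ (t * a) ^ (p - 1) :=
            Real.rpow_le_rpow hb hba (by linarith)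
        _ = t ^ (p - 1) * a ^ (p - 1) := Real.mul_rpow ht0.le ha.le
        _ = c₃ * (A * a) := by rw [hAa, hc3_def]
  have hpc : p * c₃ ≤ 1 / 4 := by
    have : p * c₃ ≤ p * t := mul_le_mul_of_nonneg_left hc3t (by linarith)
    have h2 : p * t ≤ 1 / 4 := by
      rw [ht_def]
      rw [mul_one_div, div_le_div_iff₀ (by linarith) (by norm_num)]
      linarith
    linarith
  -- inner product facts
  set s : ℝ := ⟪x, y⟫ with hs_def
  have hwy : ⟪x + y, y⟫ = s + ‖y‖ ^ 2 := by
    rw [inner_add_left, real_inner_self_eq_norm_sq]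
  have hwx : ⟪x + y, x⟫ = a ^ 2 + s := by
    rw [inner_add_left, real_inner_self_eq_norm_sq, real_inner_comm]
  have hb2 : b ^ 2 = a ^ 2 + 2 * s + ‖y‖ ^ 2 := by
    rw [hb_def, ha_def]; exact norm_add_sq_real x y
  have hcs : a ^ 2 + s ≤ b * a := by
    rw [← hwx]
    calc ⟪x + y, x⟫ ≤ ‖x + y‖ * ‖x‖ := real_inner_le_norm _ _
      _ = b * a := rfl
  -- the two nonnegative pieces
  have hdiv : B * b / a ≤ c₃ * A := by
    rw [div_le_iff₀ ha]
    linarith [key1]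
  have hdiv0 : 0 ≤ B * b / a := by positivity
  have hT1 : 0 ≤ (a - b) * (A * a - B * b) -
      (a - b) ^ 2 * (c₃ * A + (p - 2) * (B * b / a)) := by
    have hab : 0 ≤ a - b := by linarith
    have inner : 0 ≤ (A * a - B * b) - (a - b) * (c₃ * A + (p - 2) * (B * b / a)) := by
      have hsum : c₃ * A + (p - 2) * (B * b / a) ≤ c₃ * A + (p - 2) * (c₃ * A) :=
        add_le_add le_rfl (mul_le_mul_of_nonneg_left hdiv hp2)
      have hsum0 : 0 ≤ c₃ * A + (p - 2) * (c₃ * A) := by positivity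
      have hle : (a - b) * (c₃ * A + (p - 2) * (B * b / a)) ≤
          a * (c₃ * A + (p - 2) * (c₃ * A)) :=
        mul_le_mul (by linarith) hsum (by positivity) ha.le
      have hrw : a * (c₃ * A + (p - 2) * (c₃ * A)) = p * c₃ * (A * a) - c₃ * (A * a) := by
        ring
      have hq : p * c₃ * (A * a) ≤ (1 / 4) * (A * a) :=
        mul_le_mul_of_nonneg_right hpc (by positivity)
      have hAa0 : (0:ℝ) < A * a := by positivity
      linarith [key1]
    calc (0:ℝ) = (a - b) * 0 := by ring
      _ ≤ (a - b) * ((A * a - B * b) - (a - b) * (c₃ * A + (p - 2) * (B * b / a))) :=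
          mul_le_mul_of_nonneg_left inner hab
      _ = (a - b) * (A * a - B * b) -
          (a - b) ^ 2 * (c₃ * A + (p - 2) * (B * b / a)) := by ring
  have hT2 : 0 ≤ (B + (1 - 2 * c₃) * A) * (b * a - (a ^ 2 + s)) := by
    apply mul_nonneg
    · have : 0 ≤ (1 - 2 * c₃) * A := mul_nonneg (by linarith) hA.le
      linarith
    · linarith
  rw [ge_iff_le, ← sub_nonneg, hwy]
  have hid : B * (s + ‖y‖ ^ 2) - (A * s + c₃ * A * ‖y‖ ^ 2 +
      (p - 2) * (b / a) * B * (a - b) ^ 2) =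
      ((a - b) * (A * a - B * b) -
        (a - b) ^ 2 * (c₃ * A + (p - 2) * (B * b / a))) +
      (B + (1 - 2 * c₃) * A) * (b * a - (a ^ 2 + s)) := by
    have hane : a ≠ 0 := ne_of_gt ha
    field_simp
    linear_combination (c₃ * A - B) * a * hb2
  linarith [hT1, hT2, hid.ge, hid.le]
end
end

section
/- Let p ≥ 2. For all x, y ∈ ℝⁿ with x ≠ 0 and |x+y| ≤ |x|: |x+y|^{p−2}(x+y)·y ≥ |x|^{p−2}x·y + (|x+y|^{p−1}/|x|)·(|y|² + (p−2)·(|x+y| − |x|)²). -/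
open MeasureTheory Real Filter RealInnerProductSpace

noncomputable section

lemma aux_conv (p a b : ℝ) (hp : 2 ≤ p) (ha : 0 < a) (hb : 0 ≤ b) (hba : b ≤ a) :
    b ^ (p-1) + (p-1) * b ^ (p-2) * (a - b) ≤ a ^ (p-1) := by
  rcases eq_or_lt_of_le hb with hb0 | hb0
  · rw [← hb0, Real.zero_rpow (by linarith : p - 1 ≠ 0)]
    rcases eq_or_lt_of_le hp with hp2 | hp2
    · rw [← hp2]
      norm_num
    · rw [Real.zero_rpow (by linarith : p - 2 ≠ 0)]
      have := Real.rpow_nonneg ha.le (p-1)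
      linarith
  · have hs : (-1 : ℝ) ≤ a / b - 1 := by
      have : 0 ≤ a / b := div_nonneg ha.le hb
      linarith
    have key := one_add_mul_self_le_rpow_one_add hs (by linarith : (1:ℝ) ≤ p - 1)
    rw [add_sub_cancel] at key
    have hdiv : (a / b) ^ (p - 1) = a ^ (p-1) / b ^ (p-1) :=
      Real.div_rpow ha.le hb0.le (p-1)
    rw [hdiv] at key
    have hbp1 : (0:ℝ) < b ^ (p-1) := Real.rpow_pos_of_pos hb0 _
    have key2 := mul_le_mul_of_nonneg_right key hbp1.le
    rw [div_mul_cancel₀ _ hbp1.ne'] at key2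
    have hb2 : b ^ (p-1) = b ^ (p-2) * b := by
      rw [show p - 1 = (p-2) + 1 by ring, Real.rpow_add_one hb0.ne']
    calc b ^ (p-1) + (p-1) * b ^ (p-2) * (a - b)
        = (1 + (p-1) * (a/b - 1)) * b ^ (p-1) := by
          rw [hb2]; field_simp
      _ ≤ a ^ (p-1) := key2

set_option maxHeartbeats 400000 in
/-- Pointwise inequality for `p ≥ 2` in the regime `|x+y| ≤ |x|`. -/
theorem stmt17 (p : ℝ) (hp : 2 ≤ p)
    (n : ℕ) (hn : 1 ≤ n) (x y : En n) (hx : x ≠ 0) (h : ‖x + y‖ ≤ ‖x‖) :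
    ‖x + y‖ ^ (p - 2) * ⟪x + y, y⟫ ≥
      ‖x‖ ^ (p - 2) * ⟪x, y⟫ +
        (‖x + y‖ ^ (p - 1) / ‖x‖) * (‖y‖ ^ 2 + (p - 2) * (‖x + y‖ - ‖x‖) ^ 2) := by
  set a := ‖x‖ with hadef
  set b := ‖x + y‖ with hbdef
  have ha : 0 < a := norm_pos_iff.mpr hx
  have hb : 0 ≤ b := norm_nonneg _
  set t := ⟪x, x + y⟫ with htdef
  have ht : t ≤ a * b := real_inner_le_norm x (x + y)
  have h1 : ⟪x + y, y⟫ = b^2 - t := by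
    have e : ⟪x + y, y⟫ = ⟪x + y, x + y⟫ - ⟪x + y, x⟫ := by
      rw [← inner_sub_right]; congr 1; abel
    rw [e, real_inner_self_eq_norm_sq, real_inner_comm]
  have h2 : ⟪x, y⟫ = t - a^2 := by
    have e : ⟪x, y⟫ = ⟪x, x + y⟫ - ⟪x, x⟫ := by
      rw [← inner_sub_right]; congr 1; abel
    rw [e, real_inner_self_eq_norm_sq]
  have h3 : ‖y‖^2 = a^2 + b^2 - 2*t := by
    have hy : y = (x + y) - x := by abel
    rw [hy, norm_sub_sq_real, real_inner_comm]
    ring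
  set A := a ^ (p-2) with hAdef
  set B := b ^ (p-2) with hBdef
  have hA : 0 ≤ A := Real.rpow_nonneg ha.le _
  have hB : 0 ≤ B := Real.rpow_nonneg hb _
  have hBA : B ≤ A := Real.rpow_le_rpow hb h (by linarith)
  have ha1 : a ^ (p-1) = A * a := by
    rw [hAdef, show p - 1 = (p-2) + 1 by ring, Real.rpow_add_one ha.ne']
  have hb1 : b ^ (p-1) = B * b := by
    rcases eq_or_lt_of_le hb with hb0 | hb0
    · rw [← hb0, Real.zero_rpow (by linarith : p - 1 ≠ 0), mul_zero]
    · rw [hBdef, show p - 1 = (p-2) + 1 by ring, Real.rpow_add_one hb0.ne']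
  have hconv : B * b + (p-1) * B * (a - b) ≤ A * a := by
    have := aux_conv p a b hp ha hb h
    rw [ha1, hb1] at this
    linarith
  rw [h1, h2, h3, hb1]
  rw [ge_iff_le, ← mul_le_mul_iff_right₀ ha]
  have hexp : a * (A * (t - a^2) + (B * b / a) * ((a^2 + b^2 - 2*t) + (p-2)*(b-a)^2))
      = a * A * (t - a^2) + B * b * ((a^2 + b^2 - 2*t) + (p-2)*(b-a)^2) := by
    field_simp
  rw [hexp]
  have hcoef : 2 * (B * b) ≤ a * A + a * B := by
    have h5 : B * b ≤ B * a := mul_le_mul_of_nonneg_left h hB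
    have h6 : B * b ≤ A * b := mul_le_mul_of_nonneg_right hBA hb
    have h7 : A * b ≤ A * a := mul_le_mul_of_nonneg_left h hA
    linarith
  have H1 : 0 ≤ (a * b - t) * ((a * A + a * B) - 2 * (B * b)) :=
    mul_nonneg (by linarith) (by linarith)
  have hS : 0 ≤ a^2 * A - a * (B * b) - (p-1) * (a * B) * (a - b) := by
    have := mul_le_mul_of_nonneg_left hconv ha.le
    nlinarith
  have H2 : 0 ≤ (a - b) * (a^2 * A - a * (B * b) - (p-1) * (a * B) * (a - b)) :=
    mul_nonneg (by linarith) hS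
  have H3 : 0 ≤ (p-1) * B * (a - b)^3 := by
    apply mul_nonneg (mul_nonneg (by linarith) hB)
    exact pow_nonneg (by linarith) 3
  nlinarith [H1, H2, H3]
end
end

section
/- Let 1 < p < 2. There exists a constant c = c(p) > 0 such that for all x, y ∈ ℝⁿ with x ≠ 0 and |x| ≤ |x+y|: |x+y|^{p−2}|y|² + (p−2)·(|x+y|/((2−p)|x+y| + (p−1)|x|))·|x+y|^{p−2}·(|x| − |x+y|)² ≥ c·(|x|/(|x| + |y|))·|x+y|^{p−2}|y|² ≥ 0. -/
open MeasureTheory Real Filter RealInnerProductSpace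

noncomputable section

/-- Nonnegativity estimate for `1 < p < 2` when `|x| ≤ |x+y|`. -/
theorem stmt18 (p : ℝ) (hp1 : 1 < p) (hp2 : p < 2) :
    ∃ c : ℝ, 0 < c ∧
      ∀ (n : ℕ), 1 ≤ n → ∀ x y : En n, x ≠ 0 → ‖x‖ ≤ ‖x + y‖ →
        (‖x + y‖ ^ (p - 2) * ‖y‖ ^ 2 +
            (p - 2) * (‖x + y‖ / ((2 - p) * ‖x + y‖ + (p - 1) * ‖x‖)) * ‖x + y‖ ^ (p - 2) *
              (‖x‖ - ‖x + y‖) ^ 2 ≥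
          c * (‖x‖ / (‖x‖ + ‖y‖)) * ‖x + y‖ ^ (p - 2) * ‖y‖ ^ 2) ∧
        c * (‖x‖ / (‖x‖ + ‖y‖)) * ‖x + y‖ ^ (p - 2) * ‖y‖ ^ 2 ≥ 0 := by
  refine ⟨p - 1, by linarith, ?_⟩
  intro n hn x y hx hle
  set a := ‖x‖ with ha'
  set b := ‖y‖ with hb'
  set s := ‖x + y‖ with hs'
  have ha : 0 < a := norm_pos_iff.mpr hx
  have hs : 0 < s := lt_of_lt_of_le ha hle
  have hb : 0 ≤ b := norm_nonneg y
  have htr : s ≤ a + b := norm_add_le x y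
  have hD : 0 < (2 - p) * s + (p - 1) * a := by nlinarith
  have hE : 0 < a + b := by linarith
  have hsp : (0:ℝ) < s ^ (p - 2) := Real.rpow_pos_of_pos hs _
  have hsq : (s - a) ^ 2 ≤ b ^ 2 := by nlinarith
  have key2 : (p - 1) * a * b ^ 2 * ((2 - p) * s + (p - 1) * a) ≤
      (b ^ 2 * ((2 - p) * s + (p - 1) * a) + (p - 2) * s * (a - s) ^ 2) * (a + b) := by
    nlinarith [mul_nonneg (mul_nonneg (mul_nonneg (by linarith : (0:ℝ) ≤ 2 - p) hs.le) hE.le)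
        (by nlinarith : (0:ℝ) ≤ b ^ 2 - (s - a) ^ 2),
      mul_nonneg (mul_nonneg (mul_nonneg (by linarith : (0:ℝ) ≤ p - 1) ha.le) (sq_nonneg b))
        (by nlinarith [mul_le_mul_of_nonneg_left htr (by linarith : (0:ℝ) ≤ 2 - p),
            mul_nonneg (by linarith : (0:ℝ) ≤ p - 1) hb] :
          (0:ℝ) ≤ (a + b) - ((2 - p) * s + (p - 1) * a))]
  have hkey : (p - 1) * (a / (a + b)) * b ^ 2 ≤
      b ^ 2 + (p - 2) * (s / ((2 - p) * s + (p - 1) * a)) * (a - s) ^ 2 := by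
    have h := (div_le_div_iff₀ hE hD).mpr key2
    calc (p - 1) * (a / (a + b)) * b ^ 2 = (p - 1) * a * b ^ 2 / (a + b) := by ring
      _ ≤ (b ^ 2 * ((2 - p) * s + (p - 1) * a) + (p - 2) * s * (a - s) ^ 2) /
            ((2 - p) * s + (p - 1) * a) := h
      _ = b ^ 2 + (p - 2) * (s / ((2 - p) * s + (p - 1) * a)) * (a - s) ^ 2 := by
          field_simp
  constructor
  · have h := mul_le_mul_of_nonneg_left hkey hsp.le
    rw [ge_iff_le]
    nlinarith [h]
  · have : (0:ℝ) ≤ (p - 1) * (a / (a + b)) * s ^ (p - 2) * b ^ 2 :=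
      mul_nonneg (mul_nonneg (mul_nonneg (by linarith) (by positivity)) hsp.le) (sq_nonneg b)
    linarith
end
end

section
/- Let 1 < p < 2. For every real number t ≥ 1: (p−1)·t^{p−2} − (p−2)·t^p + (p−2)·t + 1 − p ≥ 0. -/
open MeasureTheory Real Filter RealInnerProductSpace

noncomputable section

/-- Elementary inequality: for `1 < p < 2` and `t ≥ 1`,
`(p-1) t^{p-2} - (p-2) t^p + (p-2) t + 1 - p ≥ 0`. -/
theorem stmt19 (p : ℝ) (hp1 : 1 < p) (hp2 : p < 2) (t : ℝ) (ht : 1 ≤ t) :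
    (p - 1) * t ^ (p - 2) - (p - 2) * t ^ p + (p - 2) * t + 1 - p ≥ 0 := by
  set f : ℝ → ℝ := fun t => (p - 1) * t ^ (p - 2) - (p - 2) * t ^ p + (p - 2) * t + 1 - p with hf
  have key : ∀ x : ℝ, 0 < x →
      HasDerivAt f ((p - 1) * ((p - 2) * x ^ (p - 2 - 1)) - (p - 2) * (p * x ^ (p - 1))
        + (p - 2) * 1) x := by
    intro x hx
    have h1 : HasDerivAt (fun t : ℝ => t ^ (p - 2)) ((p - 2) * x ^ (p - 2 - 1)) x :=
      Real.hasDerivAt_rpow_const (Or.inl hx.ne')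
    have h2 : HasDerivAt (fun t : ℝ => t ^ p) (p * x ^ (p - 1)) x :=
      Real.hasDerivAt_rpow_const (Or.inl hx.ne')
    have h3 : HasDerivAt (fun t : ℝ => t) 1 x := hasDerivAt_id x
    exact ((((h1.const_mul (p - 1)).sub (h2.const_mul (p - 2))).add
      (h3.const_mul (p - 2))).add_const 1).sub_const p
  have hmono : MonotoneOn f (Set.Ici 1) := by
    apply monotoneOn_of_deriv_nonneg (convex_Ici 1)
    · intro x hx
      exact (key x (lt_of_lt_of_le one_pos (by exact_mod_cast hx))).continuousAt.continuousWithinAt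
    · intro x hx
      rw [interior_Ici] at hx
      exact (key x (lt_trans one_pos hx)).differentiableAt.differentiableWithinAt
    · intro x hx
      rw [interior_Ici] at hx
      have hx0 : (0:ℝ) < x := lt_trans one_pos hx
      rw [(key x hx0).deriv]
      have hA : x ^ (p - 2 - 1) ≤ x ^ (p - 1) :=
        Real.rpow_le_rpow_of_exponent_le hx.le (by linarith)
      have hB : (1:ℝ) ≤ x ^ (p - 1) := Real.one_le_rpow hx.le (by linarith)
      have t1 : (0:ℝ) ≤ (2 - p) * ((p - 1) * (x ^ (p - 1) - x ^ (p - 2 - 1))) :=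
        mul_nonneg (by linarith) (mul_nonneg (by linarith) (by linarith))
      have t2 : (0:ℝ) ≤ (2 - p) * (x ^ (p - 1) - 1) :=
        mul_nonneg (by linarith) (by linarith)
      nlinarith [t1, t2]
  have h1 : f 1 = 0 := by
    simp [hf, Real.one_rpow]
  have := hmono (Set.self_mem_Ici) (Set.mem_Ici.mpr ht) ht
  rw [h1] at this
  exact this
end
end
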